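/- arXiv:2310.12711 — 5 statements merged into one kernel-verified Lean document; each statement's English description precedes it below -/
import Mathlib

section
/- Let J_p(q) = |cos_p(q)·sin_p'(q) - cos_p'(q)·sin_p(q)| be the Jacobian factor for polar coordinates defined via the L^p pseudo-angle. Then J_p(q) = (C_p/4)·(cos_p(q)^{2(p-1)} + sin_p(q)^{2(p-1)})^{-1/2}, where C_p is the circumference of the L^p unit circle. In particular J_1(q)=1, J_2(q)=π/2, J_∞(q)=2 are constant, while for p in (1,2)∪(2,∞), J_p is not constant. -/
open Set

/-!
Where `cos_p` and `sin_p` are nonzero, differentiating `|cos_p|^p + |sin_p|^p = 1` shows that the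
velocity `v = (cos_p', sin_p')` is orthogonal to the normal `N = (sign cos_p |cos_p|^(p-1),
sign sin_p |sin_p|^(p-1))`, while `N · (cos_p, sin_p) = 1`. Decomposing `v` along `N` and its
rotation then gives `J_p^2 |N|^2 = |v|^2 = (C_p/4)^2`, which is the formula.

The constants come from the speed. The four axis points (the four corners for `L^∞`) cut a period
into four arcs of equal parameter length, necessarily `1`. Along one arc, `sin_p` for `p = 1`,
`arcsin ∘ sin_2` for `p = 2`, and the free coordinate for `L^∞` move at constant rate by `1`, `π/2`
and `2`, giving `C_1/4 = √2`, `C_2/4 = π/2` and `C_∞/4 = 2`. For `1 < p ≠ 2` the formula takes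
different values at the points with `|cos_p|^p = 1/2` and `|cos_p|^p = 1/4`, by strict convexity
or concavity of `t ↦ t^(2(p-1)/p)`.
-/

namespace Function.Periodic

variable {X : Type*} {γ : ℝ → X} {c : ℝ}

lemma apply_toIcoMod (hγ : Periodic γ c) (hc : 0 < c) (t q : ℝ) :
    γ (toIcoMod hc t q) = γ q := by
  rw [← self_sub_toIcoDiv_zsmul]
  exact hγ.sub_zsmul_eq _

lemma injOn_Ico_add (hγ : Periodic γ c) (hc : 0 < c) (hinj : InjOn γ (Ico 0 c)) (t : ℝ) :
    InjOn γ (Ico t (t + c)) := by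
  intro x hx y hy hxy
  have h0 : toIcoMod hc 0 x = toIcoMod hc 0 y :=
    hinj (by simpa using toIcoMod_mem_Ico hc 0 x) (by simpa using toIcoMod_mem_Ico hc 0 y)
      (by simp only [hγ.apply_toIcoMod, hxy])
  rw [← (toIcoMod_eq_self hc).2 hx, ← (toIcoMod_eq_self hc).2 hy]
  exact (toIcoMod_eq_toIcoMod hc).2 ((toIcoMod_eq_toIcoMod hc).1 h0)

theorem eq_card_mul_of_gaps (hγ : Periodic γ c) (hc : 0 < c) (hinj : InjOn γ (Ico 0 c))
    (S : Finset X) (hS : 1 < S.card) (hSγ : ∀ P ∈ S, ∃ q, γ q = P) (L : ℝ)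
    (hgap : ∀ a b, a < b → γ a ∈ S → γ b ∈ S → γ a ≠ γ b → (∀ x ∈ Ioo a b, γ x ∉ S) →
      b - a = L) :
    c = S.card * L := by
  obtain ⟨q₀, hq₀⟩ : ∃ q₀, γ q₀ ∈ S := by
    obtain ⟨P, hP⟩ := S.card_pos.1 (by omega)
    obtain ⟨q, rfl⟩ := hSγ P hP
    exact ⟨q, hP⟩
  have hinjW := hγ.injOn_Ico_add hc hinj q₀
  set T := Ico q₀ (q₀ + c) ∩ γ ⁻¹' S
  have himage : γ '' T = S := by
    ext P
    refine ⟨fun ⟨x, hx, hxP⟩ => hxP ▸ hx.2, fun hP => ?_⟩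
    obtain ⟨q, rfl⟩ := hSγ P hP
    exact ⟨toIcoMod hc q₀ q, ⟨toIcoMod_mem_Ico hc q₀ q, by simpa [hγ.apply_toIcoMod]⟩,
      hγ.apply_toIcoMod hc q₀ q⟩
  have hinjT : InjOn γ T := hinjW.mono inter_subset_left
  have hTfin : T.Finite := Finite.of_finite_image (by rw [himage]; exact S.finite_toSet) hinjT
  have hcard : hTfin.toFinset.card = S.card := by
    rw [← ncard_eq_toFinset_card T hTfin, ← hinjT.ncard_image, himage, ncard_coe_finset]
  set n := S.card
  set e := hTfin.toFinset.orderEmbOfFin hcard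
  have he_mem : ∀ i, e i ∈ T := fun i =>
    (Finite.mem_toFinset hTfin).1 (hTfin.toFinset.orderEmbOfFin_mem hcard i)
  have he_surj : ∀ x ∈ T, ∃ i, e i = x := fun x hx => by
    rw [← Set.mem_range, Finset.range_orderEmbOfFin]; simpa using hx
  have he0 : e ⟨0, by omega⟩ = q₀ := by
    rw [Finset.orderEmbOfFin_zero]
    exact le_antisymm (Finset.min'_le _ _ (by simpa [T] using ⟨hc, hq₀⟩))
      (Finset.le_min' _ _ _ fun x hx => by simp only [Finite.mem_toFinset] at hx; exact hx.1.1)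
  let f : ℕ → ℝ := fun k => if h : k < n then e ⟨k, h⟩ else q₀ + c
  have hf_gap : ∀ k (hk : k < n), f (k + 1) - f k = L := by
    intro k hk
    have hfk : f k = e ⟨k, hk⟩ := dif_pos hk
    have hek := he_mem ⟨k, hk⟩
    -- the next passage is `e (k+1)`, or for the last one the first passage one period later
    have hnext : e ⟨k, hk⟩ < f (k + 1) ∧ f (k + 1) ≤ q₀ + c ∧ γ (f (k + 1)) ∈ S ∧
        γ (e ⟨k, hk⟩) ≠ γ (f (k + 1)) ∧ ∀ i, e i < f (k + 1) → i.val < k + 1 := by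
      by_cases hk1 : k + 1 < n
      · have hek1 := he_mem ⟨k + 1, hk1⟩
        simp only [f, dif_pos hk1]
        refine ⟨e.lt_iff_lt.2 (by simp [Fin.lt_def]), hek1.1.2.le, hek1.2,
          fun h => ?_, fun i hi => e.lt_iff_lt.1 hi⟩
        exact absurd (e.injective (hinjW hek.1 hek1.1 h)) (by simp [Fin.ext_iff])
      · simp only [f, dif_neg hk1, hγ q₀]
        refine ⟨hek.1.2, le_rfl, hq₀, fun h => ?_, fun i _ => by omega⟩
        rw [← he0] at h
        exact absurd (e.injective (hinjW hek.1 (he_mem _).1 h)) (by simp [Fin.ext_iff]; omega)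
    obtain ⟨hlt, hle, hS_next, hne, hindex⟩ := hnext
    rw [hfk]
    refine hgap _ _ hlt hek.2 hS_next hne fun x hx hxS => ?_
    obtain ⟨i, rfl⟩ := he_surj x ⟨⟨hek.1.1.trans hx.1.le, hx.2.trans_le hle⟩, hxS⟩
    have h1 : k < i.val := e.lt_iff_lt.1 hx.1
    have h2 := hindex i hx.2
    omega
  calc c = f n - f 0 := by simp [f, he0, show 0 < n by omega]
    _ = ∑ k ∈ Finset.range n, (f (k + 1) - f k) := (Finset.sum_range_sub f n).symm
    _ = n * L := by
      rw [Finset.sum_congr rfl fun k hk => hf_gap k (Finset.mem_range.1 hk)]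
      simp

end Function.Periodic

lemma abs_sub_eq_mul_of_abs_hasDerivAt_eq {h h' : ℝ → ℝ} {a b L : ℝ} (hab : a ≤ b)
    (hcont : ContinuousOn h (Icc a b)) (hderiv : ∀ x ∈ Ioo a b, HasDerivAt h (h' x) x)
    (habs : ∀ x ∈ Ioo a b, |h' x| = L) : |h b - h a| = L * (b - a) := by
  rcases hab.eq_or_lt with rfl | hab
  · simp
  obtain ⟨x, hx, hslope⟩ := exists_hasDerivAt_eq_slope h h' hab hcont hderiv
  rw [← habs x hx, hslope, abs_div, abs_of_pos (sub_pos.2 hab),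
    div_mul_cancel₀ _ (sub_pos.2 hab).ne']

lemma mul_nonneg_of_ne_zero_on_Ioo {f : ℝ → ℝ} {a b : ℝ} (hab : a ≤ b)
    (hf : ContinuousOn f (Icc a b)) (h : ∀ x ∈ Ioo a b, f x ≠ 0) : 0 ≤ f a * f b := by
  by_contra! hneg
  obtain ⟨z, hz, hfz⟩ : ∃ z ∈ uIcc a b, f z = 0 :=
    intermediate_value_uIcc (by rwa [uIcc_of_le hab]) (mem_uIcc.2 (by
      rcases mul_neg_iff.1 hneg with h | h
      · exact Or.inr ⟨h.2.le, h.1.le⟩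
      · exact Or.inl ⟨h.1.le, h.2.le⟩))
  rw [uIcc_of_le hab] at hz
  refine h z ⟨hz.1.lt_of_ne ?_, hz.2.lt_of_ne ?_⟩ hfz <;> rintro rfl <;> simp [hfz] at hneg

lemma sq_cross_mul_sq_add_sq {A B u v u' v' K : ℝ} (hrel : A * u' + B * v' = 0)
    (hnorm : A * u + B * v = 1) (hspeed : u' ^ 2 + v' ^ 2 = K ^ 2) :
    (u * v' - u' * v) ^ 2 * (A ^ 2 + B ^ 2) = K ^ 2 := by
  have hN : A ^ 2 + B ^ 2 ≠ 0 := by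
    intro h
    obtain ⟨rfl, rfl⟩ : A = 0 ∧ B = 0 := by constructor <;> nlinarith [sq_nonneg A, sq_nonneg B]
    simp at hnorm
  have h1 : (u * v' - u' * v) * (A ^ 2 + B ^ 2) = A * v' - B * u' := by
    linear_combination (B * u - A * v) * hrel + (A * v' - B * u') * hnorm
  have h2 : (A * v' - B * u') ^ 2 = (A ^ 2 + B ^ 2) * K ^ 2 := by
    linear_combination (A ^ 2 + B ^ 2) * hspeed - (A * u' + B * v') * hrel
  apply mul_left_cancel₀ hN
  linear_combination ((u * v' - u' * v) * (A ^ 2 + B ^ 2) + (A * v' - B * u')) * h1 + h2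

lemma half_rpow_add_half_rpow_ne {α : ℝ} (h0 : 0 < α) (h1 : α ≠ 1) :
    (1 / 2 : ℝ) ^ α + (1 / 2) ^ α ≠ (1 / 4) ^ α + (3 / 4) ^ α := by
  have hmem : ∀ x : ℝ, 0 < x → x ∈ Ici 0 := fun x hx => hx.le
  rcases h1.lt_or_gt with hlt | hgt
  · have := (Real.strictConcaveOn_rpow h0 hlt).2 (hmem (1 / 4) (by norm_num))
      (hmem (3 / 4) (by norm_num)) (by norm_num) (by norm_num : (0 : ℝ) < 1 / 2)
      (by norm_num : (0 : ℝ) < 1 / 2) (by norm_num)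
    norm_num at this
    intro h; linarith
  · have := (strictConvexOn_rpow hgt).2 (hmem (1 / 4) (by norm_num))
      (hmem (3 / 4) (by norm_num)) (by norm_num) (by norm_num : (0 : ℝ) < 1 / 2)
      (by norm_num : (0 : ℝ) < 1 / 2) (by norm_num)
    norm_num at this
    intro h; linarith

/-- `lpDual p` is the derivative of `u ↦ |u| ^ p / p`, so `(lpDual p u, lpDual p v)` is normal to
the `L^p` circle at `(u, v)`. -/
noncomputable def lpDual (p u : ℝ) : ℝ := SignType.sign u * |u| ^ (p - 1)

section LpDual

variable {p u : ℝ}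

lemma lpDual_mul_self (hu : u ≠ 0) : lpDual p u * u = |u| ^ p := by
  rw [lpDual, mul_right_comm, sign_mul_self, mul_comm, ← Real.rpow_add_one (abs_ne_zero.2 hu),
    sub_add_cancel]

lemma sq_lpDual (hu : u ≠ 0) : lpDual p u ^ 2 = |u| ^ (2 * (p - 1)) := by
  have hsign : (SignType.sign u : ℝ) ^ 2 = 1 := by
    rcases hu.lt_or_gt with h | h <;> simp [sign_neg, sign_pos, h]
  rw [lpDual, mul_pow, hsign, one_mul, ← Real.rpow_natCast, ← Real.rpow_mul (abs_nonneg u),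
    mul_comm]
  norm_num

lemma lpDual_two (u : ℝ) : lpDual 2 u = u := by
  norm_num [lpDual]

lemma HasDerivAt.abs_rpow {f : ℝ → ℝ} {f' x : ℝ} (hf : HasDerivAt f f' x) (hx : f x ≠ 0) :
    HasDerivAt (fun y => |f y| ^ p) (p * (lpDual p (f x) * f')) x := by
  refine (((hasDerivAt_abs hx).comp x hf).rpow_const (Or.inl (abs_ne_zero.2 hx))).congr_deriv ?_
  simp only [lpDual, Function.comp_apply]; ring

end LpDual

noncomputable def axisPoints : Finset (ℝ × ℝ) := {(1, 0), (0, 1), (-1, 0), (0, -1)}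

lemma card_axisPoints : axisPoints.card = 4 := by
  simp only [axisPoints]
  rw [Finset.card_insert_of_notMem (by norm_num), Finset.card_insert_of_notMem (by norm_num),
    Finset.card_pair (by norm_num)]

noncomputable def cornerPoints : Finset (ℝ × ℝ) := {(1, 1), (1, -1), (-1, 1), (-1, -1)}

lemma card_cornerPoints : cornerPoints.card = 4 := by
  simp only [cornerPoints]
  rw [Finset.card_insert_of_notMem (by norm_num), Finset.card_insert_of_notMem (by norm_num),
    Finset.card_pair (by norm_num)]

lemma mem_cornerPoints_iff {u v : ℝ} : (u, v) ∈ cornerPoints ↔ |u| = 1 ∧ |v| = 1 := by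
  simp only [cornerPoints, Finset.mem_insert, Finset.mem_singleton, Prod.ext_iff,
    abs_eq zero_le_one]
  tauto

section PseudoTrig

variable {p K : ℝ} {c s : ℝ → ℝ}

lemma lpDual_mul_add_lpDual_mul_eq_zero (hp : p ≠ 0) (hcirc : ∀ x, |c x| ^ p + |s x| ^ p = 1)
    {q c' s' : ℝ} (hc : HasDerivAt c c' q) (hs : HasDerivAt s s' q) (hc0 : c q ≠ 0)
    (hs0 : s q ≠ 0) :
    lpDual p (c q) * c' + lpDual p (s q) * s' = 0 := by
  have hsum := (hc.abs_rpow (p := p) hc0).add (hs.abs_rpow (p := p) hs0)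
  rw [show ((fun y => |c y| ^ p) + fun y => |s y| ^ p) = fun _ => 1 from funext hcirc] at hsum
  have := hsum.unique (hasDerivAt_const q 1)
  rw [← mul_add] at this
  exact (mul_eq_zero.1 this).resolve_left hp

theorem abs_cross_eq_of_lp_circle (hp : p ≠ 0) (hK : 0 ≤ K)
    (hcirc : ∀ x, |c x| ^ p + |s x| ^ p = 1) {q c' s' : ℝ} (hc : HasDerivAt c c' q)
    (hs : HasDerivAt s s' q) (hc0 : c q ≠ 0) (hs0 : s q ≠ 0) (hspeed : c' ^ 2 + s' ^ 2 = K ^ 2) :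
    |c q * s' - c' * s q| =
      K * (|c q| ^ (2 * (p - 1)) + |s q| ^ (2 * (p - 1))) ^ (-(1 : ℝ) / 2) := by
  have hnorm : lpDual p (c q) * c q + lpDual p (s q) * s q = 1 := by
    rw [lpDual_mul_self hc0, lpDual_mul_self hs0, hcirc]
  have key := sq_cross_mul_sq_add_sq (lpDual_mul_add_lpDual_mul_eq_zero hp hcirc hc hs hc0 hs0)
    hnorm hspeed
  rw [sq_lpDual hc0, sq_lpDual hs0] at key
  set N := |c q| ^ (2 * (p - 1)) + |s q| ^ (2 * (p - 1))
  have hN : 0 < N := by positivity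
  have hpow : (N ^ (-(1 : ℝ) / 2)) ^ 2 = N⁻¹ := by
    rw [← Real.rpow_natCast, ← Real.rpow_mul hN.le]
    norm_num [Real.rpow_neg_one]
  rw [← sq_eq_sq₀ (abs_nonneg _) (by positivity), sq_abs, mul_pow, hpow,
    eq_mul_inv_iff_mul_eq₀ hN.ne', key]

lemma mem_axisPoints_iff (hp : p ≠ 0) {u v : ℝ} (h : |u| ^ p + |v| ^ p = 1) :
    (u, v) ∈ axisPoints ↔ u = 0 ∨ v = 0 := by
  have abs_eq_one {w : ℝ} (hw : |w| ^ p = 1) : w = 1 ∨ w = -1 := by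
    rw [← Real.one_rpow p, Real.rpow_left_inj (abs_nonneg w) zero_le_one hp] at hw
    exact abs_eq zero_le_one |>.1 hw
  simp only [axisPoints, Finset.mem_insert, Finset.mem_singleton, Prod.ext_iff]
  constructor
  · rintro (⟨-, rfl⟩ | ⟨rfl, -⟩ | ⟨-, rfl⟩ | ⟨rfl, -⟩) <;> simp
  · rintro (rfl | rfl)
    · rcases abs_eq_one (by simpa [Real.zero_rpow hp] using h) with rfl | rfl <;> simp
    · rcases abs_eq_one (by simpa [Real.zero_rpow hp] using h) with rfl | rfl <;> simp

lemma axis_gap_endpoints (hp : p ≠ 0) (hc : Continuous c) (hs : Continuous s)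
    (hcirc : ∀ x, |c x| ^ p + |s x| ^ p = 1) {a b : ℝ} (hab : a ≤ b)
    (ha : (c a, s a) ∈ axisPoints) (hb : (c b, s b) ∈ axisPoints)
    (hne : (c a, s a) ≠ (c b, s b)) (hgap : ∀ x ∈ Ioo a b, (c x, s x) ∉ axisPoints) :
    (s a = 0 ∧ |s b| = 1) ∨ (|s a| = 1 ∧ s b = 0) := by
  have hc0 := mul_nonneg_of_ne_zero_on_Ioo hab hc.continuousOn fun x hx h =>
    hgap x hx ((mem_axisPoints_iff hp (hcirc x)).2 (Or.inl h))
  have hs0 := mul_nonneg_of_ne_zero_on_Ioo hab hs.continuousOn fun x hx h =>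
    hgap x hx ((mem_axisPoints_iff hp (hcirc x)).2 (Or.inr h))
  -- two distinct axis points on the same axis would force a sign change of `c` or `s` on `(a, b)`
  simp only [axisPoints, Finset.mem_insert, Finset.mem_singleton, Prod.ext_iff] at ha hb hne
  rcases ha with ⟨ha1, ha2⟩ | ⟨ha1, ha2⟩ | ⟨ha1, ha2⟩ | ⟨ha1, ha2⟩ <;>
  rcases hb with ⟨hb1, hb2⟩ | ⟨hb1, hb2⟩ | ⟨hb1, hb2⟩ | ⟨hb1, hb2⟩ <;>
  simp only [ha1, ha2, hb1, hb2] at hc0 hs0 hne ⊢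
  all_goals norm_num at *

theorem l1_gap_length (hK : 0 < K) (hc : Continuous c) (hs : Continuous s)
    (hcirc : ∀ x, |c x| + |s x| = 1)
    (hdiff : ∀ x, c x ≠ 0 → s x ≠ 0 → DifferentiableAt ℝ c x ∧ DifferentiableAt ℝ s x)
    (hspeed : ∀ x, c x ≠ 0 → s x ≠ 0 → deriv c x ^ 2 + deriv s x ^ 2 = K ^ 2)
    {a b : ℝ} (hab : a < b) (ha : (c a, s a) ∈ axisPoints) (hb : (c b, s b) ∈ axisPoints)
    (hne : (c a, s a) ≠ (c b, s b)) (hgap : ∀ x ∈ Ioo a b, (c x, s x) ∉ axisPoints) :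
    b - a = √2 / K := by
  have hcirc' : ∀ x, |c x| ^ (1 : ℝ) + |s x| ^ (1 : ℝ) = 1 := by simpa using hcirc
  have hjump : |s b - s a| = 1 := by
    rcases axis_gap_endpoints one_ne_zero hc hs hcirc' hab.le ha hb hne hgap with h | h
    · rw [h.1, sub_zero, h.2]
    · rw [h.2, zero_sub, abs_neg, h.1]
  have hnz : ∀ x ∈ Ioo a b, c x ≠ 0 ∧ s x ≠ 0 := fun x hx => by
    simpa [not_or] using (mem_axisPoints_iff one_ne_zero (hcirc' x)).not.1 (hgap x hx)
  have hslope : ∀ x ∈ Ioo a b, |deriv s x| = K / √2 := by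
    intro x hx
    obtain ⟨hc0, hs0⟩ := hnz x hx
    obtain ⟨hdc, hds⟩ := hdiff x hc0 hs0
    have hrel := lpDual_mul_add_lpDual_mul_eq_zero one_ne_zero hcirc' hdc.hasDerivAt
      hds.hasDerivAt hc0 hs0
    have hA := sq_lpDual (p := 1) hc0
    have hB := sq_lpDual (p := 1) hs0
    simp only [sub_self, mul_zero, Real.rpow_zero] at hA hB
    -- the normal `(lpDual 1 (c x), lpDual 1 (s x))` has entries `±1`, so `|c'| = |s'|`
    have hsq : deriv s x ^ 2 = (K / √2) ^ 2 := by
      rw [div_pow, Real.sq_sqrt zero_le_two]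
      linear_combination (lpDual 1 (s x) * deriv s x - lpDual 1 (c x) * deriv c x) / 2 * hrel
        + hspeed x hc0 hs0 / 2 + deriv c x ^ 2 / 2 * hA - deriv s x ^ 2 / 2 * hB
    rw [← sq_abs, sq_eq_sq₀ (abs_nonneg _) (by positivity)] at hsq
    exact hsq
  have := abs_sub_eq_mul_of_abs_hasDerivAt_eq hab.le hs.continuousOn
    (fun x hx => (hdiff x (hnz x hx).1 (hnz x hx).2).2.hasDerivAt) hslope
  rw [hjump] at this
  rw [eq_div_iff hK.ne']
  field_simp at this
  linarith

theorem l2_gap_length (hK : 0 < K) (hc : Continuous c) (hs : Continuous s)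
    (hcirc : ∀ x, c x ^ 2 + s x ^ 2 = 1)
    (hdiff : ∀ x, c x ≠ 0 → s x ≠ 0 → DifferentiableAt ℝ c x ∧ DifferentiableAt ℝ s x)
    (hspeed : ∀ x, c x ≠ 0 → s x ≠ 0 → deriv c x ^ 2 + deriv s x ^ 2 = K ^ 2)
    {a b : ℝ} (hab : a < b) (ha : (c a, s a) ∈ axisPoints) (hb : (c b, s b) ∈ axisPoints)
    (hne : (c a, s a) ≠ (c b, s b)) (hgap : ∀ x ∈ Ioo a b, (c x, s x) ∉ axisPoints) :
    b - a = Real.pi / 2 / K := by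
  have hcirc' : ∀ x, |c x| ^ (2 : ℝ) + |s x| ^ (2 : ℝ) = 1 := by
    simpa only [Real.rpow_two, sq_abs] using hcirc
  have hjump : |Real.arcsin (s b) - Real.arcsin (s a)| = Real.pi / 2 := by
    rcases axis_gap_endpoints two_ne_zero hc hs hcirc' hab.le ha hb hne hgap with
      ⟨h0, h1⟩ | ⟨h1, h0⟩ <;>
    rcases abs_eq zero_le_one |>.1 h1 with h | h <;>
    simp [h0, h] <;> positivity
  have hnz : ∀ x ∈ Ioo a b, c x ≠ 0 ∧ s x ≠ 0 := fun x hx => by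
    simpa [not_or] using (mem_axisPoints_iff two_ne_zero (hcirc' x)).not.1 (hgap x hx)
  have hderiv : ∀ x ∈ Ioo a b, HasDerivAt (Real.arcsin ∘ s)
      (1 / √(1 - s x ^ 2) * deriv s x) x := by
    intro x hx
    obtain ⟨hc0, hs0⟩ := hnz x hx
    have hs1 : s x ^ 2 < 1 := by nlinarith [hcirc x, sq_pos_of_ne_zero hc0]
    refine (Real.hasDerivAt_arcsin ?_ ?_).comp x (hdiff x hc0 hs0).2.hasDerivAt <;>
      rintro h <;> rw [h] at hs1 <;> norm_num at hs1
  have hslope : ∀ x ∈ Ioo a b, |1 / √(1 - s x ^ 2) * deriv s x| = K := by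
    intro x hx
    obtain ⟨hc0, hs0⟩ := hnz x hx
    obtain ⟨hdc, hds⟩ := hdiff x hc0 hs0
    have hrel := lpDual_mul_add_lpDual_mul_eq_zero two_ne_zero hcirc' hdc.hasDerivAt
      hds.hasDerivAt hc0 hs0
    rw [lpDual_two, lpDual_two] at hrel
    have hds' : |deriv s x| = K * |c x| := by
      rw [← sq_eq_sq₀ (abs_nonneg _) (by positivity), sq_abs, mul_pow, sq_abs]
      linear_combination (s x * deriv s x - c x * deriv c x) * hrel
        + c x ^ 2 * hspeed x hc0 hs0 - deriv s x ^ 2 * hcirc x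
    rw [show 1 - s x ^ 2 = c x ^ 2 by linarith [hcirc x], Real.sqrt_sq_eq_abs, abs_mul, abs_div,
      abs_one, abs_abs, hds']
    field_simp
  have := abs_sub_eq_mul_of_abs_hasDerivAt_eq hab.le
    (Real.continuous_arcsin.comp hs).continuousOn hderiv hslope
  simp only [Function.comp_apply, hjump] at this
  rw [eq_div_iff hK.ne']
  linarith

lemma linfty_hasDerivAt_zero (hc : Continuous c) (hs : Continuous s)
    (hcirc : ∀ x, max |c x| |s x| = 1) {q : ℝ} (hq : |s q| < |c q|) : HasDerivAt c 0 q := by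
  have hc1 {x : ℝ} (hx : |s x| < |c x|) : |c x| = 1 := by simpa [max_eq_left hx.le] using hcirc x
  have hcq : c q ≠ 0 := abs_pos.1 ((abs_nonneg _).trans_lt hq)
  have hside : ∀ᶠ x in nhds q, |s x| < |c x| :=
    hs.abs.continuousAt.eventually_lt hc.abs.continuousAt hq
  have hsign : ∀ᶠ x in nhds q, 0 < c x * c q :=
    continuousAt_const.eventually_lt (hc.mul continuous_const).continuousAt (mul_self_pos.2 hcq)
  refine (hasDerivAt_const q (c q)).congr_of_eventuallyEq ?_
  filter_upwards [hside, hsign] with x h1 h2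
  rcases abs_eq_abs.1 ((hc1 h1).trans (hc1 hq).symm) with h | h
  · exact h
  · rw [h] at h2; nlinarith

lemma linfty_side_gap_length (hK : 0 < K) (hc : Continuous c) (hs : Continuous s)
    (hcirc : ∀ x, max |c x| |s x| = 1) {a b : ℝ} (hab : a < b)
    (hds : ∀ x ∈ Ioo a b, DifferentiableAt ℝ s x)
    (hspeed : ∀ x ∈ Ioo a b, deriv c x ^ 2 + deriv s x ^ 2 = K ^ 2)
    (hsa : |s a| = 1) (hsb : |s b| = 1) (hne : c a ≠ c b ∨ s a ≠ s b)
    (hside : ∀ x ∈ Ioo a b, |s x| < |c x|) :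
    b - a = 2 / K := by
  have hc' := fun x hx => linfty_hasDerivAt_zero hc hs hcirc (hside x hx)
  have hca : c a = c b := by
    have := abs_sub_eq_mul_of_abs_hasDerivAt_eq hab.le hc.continuousOn hc' fun _ _ => abs_zero
    rw [zero_mul, abs_eq_zero, sub_eq_zero] at this
    exact this.symm
  have hjump : |s b - s a| = 2 := by
    have hsab := hne.resolve_left (not_not.2 hca)
    rcases abs_eq zero_le_one |>.1 hsa with h | h <;>
    rcases abs_eq zero_le_one |>.1 hsb with h' | h' <;>
    simp only [h, h'] at hsab ⊢ <;> first | exact absurd rfl hsab | norm_num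
  have hslope : ∀ x ∈ Ioo a b, |deriv s x| = K := by
    intro x hx
    have := hspeed x hx
    rw [(hc' x hx).deriv] at this
    rw [← sq_eq_sq₀ (abs_nonneg _) hK.le, sq_abs]
    linarith
  have := abs_sub_eq_mul_of_abs_hasDerivAt_eq hab.le hs.continuousOn
    (fun x hx => (hds x hx).hasDerivAt) hslope
  rw [hjump] at this
  rw [eq_div_iff hK.ne']
  linarith

theorem linfty_gap_length (hK : 0 < K) (hc : Continuous c) (hs : Continuous s)
    (hcirc : ∀ x, max |c x| |s x| = 1)
    (hdiff : ∀ x, |c x| ≠ |s x| → DifferentiableAt ℝ c x ∧ DifferentiableAt ℝ s x)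
    (hspeed : ∀ x, |c x| ≠ |s x| → deriv c x ^ 2 + deriv s x ^ 2 = K ^ 2)
    {a b : ℝ} (hab : a < b) (ha : (c a, s a) ∈ cornerPoints) (hb : (c b, s b) ∈ cornerPoints)
    (hne : (c a, s a) ≠ (c b, s b)) (hgap : ∀ x ∈ Ioo a b, (c x, s x) ∉ cornerPoints) :
    b - a = 2 / K := by
  have hoff : ∀ x ∈ Ioo a b, |c x| ≠ |s x| := fun x hx h => by
    have hc1 : |c x| = 1 := by simpa [← h] using hcirc x
    exact hgap x hx (mem_cornerPoints_iff.2 ⟨hc1, h ▸ hc1⟩)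
  rw [mem_cornerPoints_iff] at ha hb
  have hne' : c a ≠ c b ∨ s a ≠ s b := by
    by_contra! h
    exact hne (Prod.ext h.1 h.2)
  have hsides : (∀ x ∈ Ioo a b, |s x| < |c x|) ∨ ∀ x ∈ Ioo a b, |c x| < |s x| := by
    by_contra! h
    obtain ⟨⟨x, hx, hxle⟩, ⟨y, hy, hyle⟩⟩ := h
    obtain ⟨z, hz, hzeq⟩ := isPreconnected_Ioo.intermediate_value₂ hx hy
      hc.abs.continuousOn hs.abs.continuousOn hxle hyle
    exact hoff z hz hzeq
  rcases hsides with h | h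
  · exact linfty_side_gap_length hK hc hs hcirc hab (fun x hx => (hdiff x (hoff x hx)).2)
      (fun x hx => hspeed x (hoff x hx)) ha.2 hb.2 hne' h
  · exact linfty_side_gap_length hK hs hc (fun x => max_comm |s x| |c x| ▸ hcirc x) hab
      (fun x hx => (hdiff x (hoff x hx)).1)
      (fun x hx => add_comm (deriv s x ^ 2) _ ▸ hspeed x (hoff x hx)) ha.1 hb.1 hne'.symm h

lemma speed_eq_of_gap_length {v : ℝ} (hK : 0 < K) (hpc : Function.Periodic c 4)
    (hps : Function.Periodic s 4) (hinj : InjOn (fun q => (c q, s q)) (Ico 0 4))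
    (S : Finset (ℝ × ℝ)) (hS : S.card = 4) (hSγ : ∀ P ∈ S, ∃ q, (c q, s q) = P)
    (hgap : ∀ a b, a < b → (c a, s a) ∈ S → (c b, s b) ∈ S → (c a, s a) ≠ (c b, s b) →
      (∀ x ∈ Ioo a b, (c x, s x) ∉ S) → b - a = v / K) :
    K = v := by
  have h := Function.Periodic.eq_card_mul_of_gaps (γ := fun q => (c q, s q))
    (fun q => by simp [hpc q, hps q]) four_pos hinj S (by omega) hSγ _ hgap
  rw [hS, Nat.cast_ofNat] at h
  field_simp at h
  linarith

theorem l1_speed_eq_sqrt_two (hK : 0 < K) (hc : Continuous c) (hs : Continuous s)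
    (hpc : Function.Periodic c 4) (hps : Function.Periodic s 4)
    (hcirc : ∀ x, |c x| + |s x| = 1) (hsurj : ∀ u v, |u| + |v| = 1 → ∃ q, c q = u ∧ s q = v)
    (hinj : InjOn (fun q => (c q, s q)) (Ico 0 4))
    (hdiff : ∀ x, c x ≠ 0 → s x ≠ 0 → DifferentiableAt ℝ c x ∧ DifferentiableAt ℝ s x)
    (hspeed : ∀ x, c x ≠ 0 → s x ≠ 0 → deriv c x ^ 2 + deriv s x ^ 2 = K ^ 2) :
    K = √2 := by
  refine speed_eq_of_gap_length hK hpc hps hinj axisPoints card_axisPoints (fun P hP => ?_)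
    fun a b hab ha hb hne hgap => l1_gap_length hK hc hs hcirc hdiff hspeed hab ha hb hne hgap
  obtain ⟨q, hq⟩ := hsurj P.1 P.2 (by
    simp only [axisPoints, Finset.mem_insert, Finset.mem_singleton] at hP
    rcases hP with rfl | rfl | rfl | rfl <;> norm_num)
  exact ⟨q, Prod.ext hq.1 hq.2⟩

theorem l2_speed_eq_pi_div_two (hK : 0 < K) (hc : Continuous c) (hs : Continuous s)
    (hpc : Function.Periodic c 4) (hps : Function.Periodic s 4)
    (hcirc : ∀ x, c x ^ 2 + s x ^ 2 = 1) (hsurj : ∀ u v, u ^ 2 + v ^ 2 = 1 → ∃ q, c q = u ∧ s q = v)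
    (hinj : InjOn (fun q => (c q, s q)) (Ico 0 4))
    (hdiff : ∀ x, c x ≠ 0 → s x ≠ 0 → DifferentiableAt ℝ c x ∧ DifferentiableAt ℝ s x)
    (hspeed : ∀ x, c x ≠ 0 → s x ≠ 0 → deriv c x ^ 2 + deriv s x ^ 2 = K ^ 2) :
    K = Real.pi / 2 := by
  refine speed_eq_of_gap_length hK hpc hps hinj axisPoints card_axisPoints (fun P hP => ?_)
    fun a b hab ha hb hne hgap => l2_gap_length hK hc hs hcirc hdiff hspeed hab ha hb hne hgap
  obtain ⟨q, hq⟩ := hsurj P.1 P.2 (by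
    simp only [axisPoints, Finset.mem_insert, Finset.mem_singleton] at hP
    rcases hP with rfl | rfl | rfl | rfl <;> norm_num)
  exact ⟨q, Prod.ext hq.1 hq.2⟩

theorem linfty_speed_eq_two (hK : 0 < K) (hc : Continuous c) (hs : Continuous s)
    (hpc : Function.Periodic c 4) (hps : Function.Periodic s 4)
    (hcirc : ∀ x, max |c x| |s x| = 1)
    (hsurj : ∀ u v, max |u| |v| = 1 → ∃ q, c q = u ∧ s q = v)
    (hinj : InjOn (fun q => (c q, s q)) (Ico 0 4))
    (hdiff : ∀ x, |c x| ≠ |s x| → DifferentiableAt ℝ c x ∧ DifferentiableAt ℝ s x)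
    (hspeed : ∀ x, |c x| ≠ |s x| → deriv c x ^ 2 + deriv s x ^ 2 = K ^ 2) :
    K = 2 := by
  refine speed_eq_of_gap_length hK hpc hps hinj cornerPoints card_cornerPoints (fun P hP => ?_)
    fun a b hab ha hb hne hgap => linfty_gap_length hK hc hs hcirc hdiff hspeed hab ha hb hne hgap
  obtain ⟨q, hq⟩ := hsurj P.1 P.2 (by
    obtain ⟨h1, h2⟩ := mem_cornerPoints_iff.1 hP
    rw [h1, h2, max_self])
  exact ⟨q, Prod.ext hq.1 hq.2⟩

lemma linfty_abs_cross_eq (hK : 0 ≤ K) (hc : Continuous c) (hs : Continuous s)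
    (hcirc : ∀ x, max |c x| |s x| = 1) {q : ℝ} (hq : |s q| < |c q|)
    (hspeed : deriv c q ^ 2 + deriv s q ^ 2 = K ^ 2) :
    |c q * deriv s q - deriv c q * s q| = K := by
  have hc' := (linfty_hasDerivAt_zero hc hs hcirc hq).deriv
  have hc1 : |c q| = 1 := by simpa [max_eq_left hq.le] using hcirc q
  rw [hc', zero_mul, sub_zero, abs_mul, hc1, one_mul, ← sq_eq_sq₀ (abs_nonneg _) hK, sq_abs]
  simpa [hc'] using hspeed

theorem exists_ne_of_lp_jacobian (hp1 : 1 < p) (hp2 : p ≠ 2)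
    (hK : 0 < K) (J : ℝ → ℝ) (hsurj : ∀ u v, |u| ^ p + |v| ^ p = 1 → ∃ q, c q = u ∧ s q = v)
    (hJ : ∀ q, c q ≠ 0 → s q ≠ 0 →
      J q = K * (|c q| ^ (2 * (p - 1)) + |s q| ^ (2 * (p - 1))) ^ (-(1 : ℝ) / 2)) :
    ∃ q₁ q₂, (c q₁ ≠ 0 ∧ s q₁ ≠ 0) ∧ (c q₂ ≠ 0 ∧ s q₂ ≠ 0) ∧ J q₁ ≠ J q₂ := by
  obtain ⟨α, hα⟩ : ∃ α, p⁻¹ * (2 * (p - 1)) = α := ⟨_, rfl⟩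
  have hα0 : 0 < α := hα ▸ mul_pos (by positivity) (by linarith)
  have hα1 : α ≠ 1 := by
    rw [← hα, Ne, inv_mul_eq_one₀ (by linarith)]
    contrapose! hp2
    linarith
  -- the point of the circle with `|cos_p|^p = t`
  have hpoint : ∀ t : ℝ, 0 < t → t < 1 → ∃ q, (c q ≠ 0 ∧ s q ≠ 0) ∧
      J q = K * (t ^ α + (1 - t) ^ α) ^ (-(1 : ℝ) / 2) := by
    intro t ht0 ht1
    have hroot : ∀ x : ℝ, 0 < x → |x ^ p⁻¹| ^ p = x := fun x hx => by
      rw [abs_of_pos (by positivity), ← Real.rpow_mul hx.le, inv_mul_cancel₀ (by linarith),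
        Real.rpow_one]
    obtain ⟨q, hcq, hsq⟩ := hsurj (t ^ p⁻¹) ((1 - t) ^ p⁻¹)
      (by rw [hroot t ht0, hroot (1 - t) (by linarith)]; ring)
    have hcq0 : c q ≠ 0 := by rw [hcq]; positivity
    have hsq0 : s q ≠ 0 := by rw [hsq]; exact (Real.rpow_pos_of_pos (by linarith) _).ne'
    refine ⟨q, ⟨hcq0, hsq0⟩, ?_⟩
    rw [hJ q hcq0 hsq0, hcq, hsq, abs_of_pos (by positivity),
      abs_of_pos (Real.rpow_pos_of_pos (by linarith) _), ← Real.rpow_mul ht0.le,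
      ← Real.rpow_mul (by linarith), hα]
  obtain ⟨q₁, hq₁, hJ₁⟩ := hpoint (1 / 2) (by norm_num) (by norm_num)
  obtain ⟨q₂, hq₂, hJ₂⟩ := hpoint (1 / 4) (by norm_num) (by norm_num)
  refine ⟨q₁, q₂, hq₁, hq₂, fun h => half_rpow_add_half_rpow_ne hα0 hα1 ?_⟩
  rw [hJ₁, hJ₂, mul_right_inj' hK.ne', Real.rpow_left_inj (by positivity) (by positivity)
    (by norm_num)] at h
  norm_num at h
  exact h

end PseudoTrig

theorem stmt1_general (p : ℝ) (hp : 0 < p)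
    (cosp sinp : ℝ → ℝ) (Cp : ℝ) (hCp : 0 < Cp)
    (hcontc : Continuous cosp) (hconts : Continuous sinp)
    (hperc : Function.Periodic cosp 4) (hpers : Function.Periodic sinp 4)
    (hcircle : ∀ q, |cosp q| ^ p + |sinp q| ^ p = 1)
    (hsurj : ∀ u v : ℝ, |u| ^ p + |v| ^ p = 1 → ∃ q, cosp q = u ∧ sinp q = v)
    (hinj : Set.InjOn (fun q => (cosp q, sinp q)) (Set.Ico (0 : ℝ) 4))
    (hdiff : ∀ q, cosp q ≠ 0 → sinp q ≠ 0 →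
      DifferentiableAt ℝ cosp q ∧ DifferentiableAt ℝ sinp q)
    (hspeed : ∀ q, cosp q ≠ 0 → sinp q ≠ 0 →
      (deriv cosp q) ^ 2 + (deriv sinp q) ^ 2 = (Cp / 4) ^ 2) :
    (∀ q, cosp q ≠ 0 → sinp q ≠ 0 →
      |cosp q * deriv sinp q - deriv cosp q * sinp q|
        = (Cp / 4) * (|cosp q| ^ (2 * (p - 1)) + |sinp q| ^ (2 * (p - 1))) ^ (-(1 : ℝ) / 2)) ∧
    (p = 1 → ∀ q, cosp q ≠ 0 → sinp q ≠ 0 →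
      |cosp q * deriv sinp q - deriv cosp q * sinp q| = 1) ∧
    (p = 2 → ∀ q, cosp q ≠ 0 → sinp q ≠ 0 →
      |cosp q * deriv sinp q - deriv cosp q * sinp q| = Real.pi / 2) ∧
    ((1 < p ∧ p ≠ 2) → ∃ q₁ q₂ : ℝ, (cosp q₁ ≠ 0 ∧ sinp q₁ ≠ 0) ∧ (cosp q₂ ≠ 0 ∧ sinp q₂ ≠ 0) ∧
      |cosp q₁ * deriv sinp q₁ - deriv cosp q₁ * sinp q₁|
        ≠ |cosp q₂ * deriv sinp q₂ - deriv cosp q₂ * sinp q₂|) ∧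
    (∀ (cosi sini : ℝ → ℝ) (Ci : ℝ), 0 < Ci → Continuous cosi → Continuous sini →
      Function.Periodic cosi 4 → Function.Periodic sini 4 → cosi 0 = 1 → sini 0 = 0 →
      (∀ q, max |cosi q| |sini q| = 1) →
      (∀ u v : ℝ, max |u| |v| = 1 → ∃ q, cosi q = u ∧ sini q = v) →
      Set.InjOn (fun q => (cosi q, sini q)) (Set.Ico (0 : ℝ) 4) →
      (∀ q, |cosi q| ≠ |sini q| → DifferentiableAt ℝ cosi q ∧ DifferentiableAt ℝ sini q) →
      (∀ q, |cosi q| ≠ |sini q| → (deriv cosi q) ^ 2 + (deriv sini q) ^ 2 = (Ci / 4) ^ 2) →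
      ∀ q, |cosi q| ≠ |sini q| →
        |cosi q * deriv sini q - deriv cosi q * sini q| = 2) := by
  have hK : 0 < Cp / 4 := by positivity
  have hJ : ∀ q, cosp q ≠ 0 → sinp q ≠ 0 → |cosp q * deriv sinp q - deriv cosp q * sinp q|
      = Cp / 4 * (|cosp q| ^ (2 * (p - 1)) + |sinp q| ^ (2 * (p - 1))) ^ (-(1 : ℝ) / 2) :=
    fun q hc hs => abs_cross_eq_of_lp_circle hp.ne' hK.le hcircle
      (hdiff q hc hs).1.hasDerivAt (hdiff q hc hs).2.hasDerivAt hc hs (hspeed q hc hs)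
  refine ⟨hJ, ?_, ?_, fun ⟨hp1, hp2⟩ => exists_ne_of_lp_jacobian hp1 hp2 hK _ hsurj hJ, ?_⟩
  · rintro rfl q hc hs
    simp only [Real.rpow_one] at hcircle hsurj
    rw [hJ q hc hs, l1_speed_eq_sqrt_two hK hcontc hconts hperc hpers hcircle hsurj hinj hdiff
      hspeed]
    norm_num [Real.sqrt_eq_rpow, ← Real.rpow_add two_pos]
  · rintro rfl q hc hs
    rw [hJ q hc hs, show (2 : ℝ) * (2 - 1) = 2 by norm_num, hcircle, Real.one_rpow, mul_one]
    simp only [Real.rpow_two, sq_abs] at hcircle hsurj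
    exact l2_speed_eq_pi_div_two hK hcontc hconts hperc hpers hcircle hsurj hinj hdiff hspeed
  · intro c s C hC hc hs hpc hps _ _ hcirc hsurj' hinj' hdiff' hspeed' q hq
    rw [← linfty_speed_eq_two (by positivity : 0 < C / 4) hc hs hpc hps hcirc hsurj' hinj' hdiff'
      hspeed']
    rcases hq.lt_or_gt with h | h
    · rw [abs_sub_comm, mul_comm (c q), mul_comm (deriv c q)]
      exact linfty_abs_cross_eq (by positivity) hs hc (fun x => max_comm |s x| |c x| ▸ hcirc x) h
        (add_comm (deriv c q ^ 2) _ ▸ hspeed' q hq)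
    · exact linfty_abs_cross_eq (by positivity) hc hs hcirc h (hspeed' q hq)

/-- The Jacobian factor `J_p(q) = |cos_p(q)·sin_p'(q) - cos_p'(q)·sin_p(q)|` for polar
coordinates defined via the `L^p` pseudo-angle satisfies
`J_p(q) = (C_p/4)·(|cos_p q|^{2(p-1)} + |sin_p q|^{2(p-1)})^{-1/2}`, where `C_p` is the
circumference of the `L^p` unit circle.  In particular `J_1 ≡ 1`, `J_2 ≡ π/2`, `J_∞ ≡ 2`
are constant, while for `p ∈ (1,2)∪(2,∞)`, `J_p` is not constant.
Here `cos_p, sin_p` are the pseudo-trigonometric functions: the 4-periodic, injective (over a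
period), constant-speed (speed `C_p/4`) parametrization of the `L^p` unit circle starting at
`(1,0)`, differentiable away from the axes. -/
theorem stmt1 (p : ℝ) (hp : 0 < p)
    (cosp sinp : ℝ → ℝ) (Cp : ℝ) (hCp : 0 < Cp)
    (hcontc : Continuous cosp) (hconts : Continuous sinp)
    (hperc : Function.Periodic cosp 4) (hpers : Function.Periodic sinp 4)
    (hstartc : cosp 0 = 1) (hstarts : sinp 0 = 0)
    (hcircle : ∀ q, |cosp q| ^ p + |sinp q| ^ p = 1)
    (hsurj : ∀ u v : ℝ, |u| ^ p + |v| ^ p = 1 → ∃ q, cosp q = u ∧ sinp q = v)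
    (hinj : Set.InjOn (fun q => (cosp q, sinp q)) (Set.Ico (0 : ℝ) 4))
    (hdiff : ∀ q, cosp q ≠ 0 → sinp q ≠ 0 →
      DifferentiableAt ℝ cosp q ∧ DifferentiableAt ℝ sinp q)
    (hspeed : ∀ q, cosp q ≠ 0 → sinp q ≠ 0 →
      (deriv cosp q) ^ 2 + (deriv sinp q) ^ 2 = (Cp / 4) ^ 2) :
    (∀ q, cosp q ≠ 0 → sinp q ≠ 0 →
      |cosp q * deriv sinp q - deriv cosp q * sinp q|
        = (Cp / 4) * (|cosp q| ^ (2 * (p - 1)) + |sinp q| ^ (2 * (p - 1))) ^ (-(1 : ℝ) / 2)) ∧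
    (p = 1 → ∀ q, cosp q ≠ 0 → sinp q ≠ 0 →
      |cosp q * deriv sinp q - deriv cosp q * sinp q| = 1) ∧
    (p = 2 → ∀ q, cosp q ≠ 0 → sinp q ≠ 0 →
      |cosp q * deriv sinp q - deriv cosp q * sinp q| = Real.pi / 2) ∧
    ((1 < p ∧ p ≠ 2) → ∃ q₁ q₂ : ℝ, (cosp q₁ ≠ 0 ∧ sinp q₁ ≠ 0) ∧ (cosp q₂ ≠ 0 ∧ sinp q₂ ≠ 0) ∧
      |cosp q₁ * deriv sinp q₁ - deriv cosp q₁ * sinp q₁|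
        ≠ |cosp q₂ * deriv sinp q₂ - deriv cosp q₂ * sinp q₂|) ∧
    (∀ (cosi sini : ℝ → ℝ) (Ci : ℝ), 0 < Ci → Continuous cosi → Continuous sini →
      Function.Periodic cosi 4 → Function.Periodic sini 4 → cosi 0 = 1 → sini 0 = 0 →
      (∀ q, max |cosi q| |sini q| = 1) →
      (∀ u v : ℝ, max |u| |v| = 1 → ∃ q, cosi q = u ∧ sini q = v) →
      Set.InjOn (fun q => (cosi q, sini q)) (Set.Ico (0 : ℝ) 4) →
      (∀ q, |cosi q| ≠ |sini q| → DifferentiableAt ℝ cosi q ∧ DifferentiableAt ℝ sini q) →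
      (∀ q, |cosi q| ≠ |sini q| → (deriv cosi q) ^ 2 + (deriv sini q) ^ 2 = (Ci / 4) ^ 2) →
      ∀ q, |cosi q| ≠ |sini q| →
        |cosi q * deriv sini q - deriv cosi q * sini q| = 2) :=
  stmt1_general p hp cosp sinp Cp hCp hcontc hconts hperc hpers hcircle hsurj hinj hdiff hspeed
end

section
/- If X and Y are independent standard normal random variables, then the random variables R = √(X²+Y²) and Θ = atan2(Y,X) are independent, with joint density f(r,θ) = (r/2π)·exp(-r²/2); whereas if X and Y are independent standard Laplace random variables, then R₁ = |X|+|Y| and the L^1 pseudo-angle Q are independent, with joint density f(r,q) = (r/4)·exp(-r). -/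
open MeasureTheory Set

/-- Standard bivariate normal density (independent standard normal margins). -/
noncomputable def normDens (p : ℝ × ℝ) : ℝ :=
  (1 / (2 * Real.pi)) * Real.exp (-(p.1 ^ 2 + p.2 ^ 2) / 2)

/-- Density of two independent standard Laplace variables. -/
noncomputable def lapDens (p : ℝ × ℝ) : ℝ :=
  (1 / 4) * Real.exp (-(|p.1| + |p.2|))

/-- Standard polar coordinates `(R, Θ)` with `R = √(x²+y²)`, `Θ = atan2(y,x)`. -/
noncomputable def polarMap (p : ℝ × ℝ) : ℝ × ℝ :=
  (Real.sqrt (p.1 ^ 2 + p.2 ^ 2), Complex.arg ⟨p.1, p.2⟩)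

/-- `L¹` polar coordinates `(R₁, Q)` with `R₁ = |x|+|y|` and `Q` the `L¹` pseudo-angle
`Q = ε(y)·(1 - x/(|x|+|y|))`. -/
noncomputable def l1PolarMap (p : ℝ × ℝ) : ℝ × ℝ :=
  (|p.1| + |p.2|, (if 0 ≤ p.2 then (1 : ℝ) else -1) * (1 - p.1 / (|p.1| + |p.2|)))

open Real Filter Topology
open scoped ENNReal

/-! Both statements are instances of one change of variables. If `T` is inverted on a set `U` by
a differentiable map `S : V → U`, then `T` pushes the measure with density `f` on `U` forward to
the measure with density `|det DS| · (f ∘ S)` on `V`. For polar coordinates `S (r, θ) =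
(r cos θ, r sin θ)` has Jacobian `r`. For `L¹` polar coordinates, on each (half-closed) quadrant `S`
has the form `(r, q) ↦ r • (a + b q, c + d q)` with `ad - bc = 1`, so its Jacobian is again `r`; and
`|x| + |y| = r` makes the Laplace density `exp (-r) / 4` there. In both cases the resulting joint
density is a function of the radius times a constant on the angle interval, so the joint law is
the product of its marginals. -/

section ChangeOfVariables

variable {E : Type*} [NormedAddCommGroup E] [NormedSpace ℝ E] [FiniteDimensional ℝ E]
  [MeasurableSpace E] [BorelSpace E] (μ : Measure E) [μ.IsAddHaarMeasure]

theorem map_withDensity_indicator_source (e : PartialEquiv E E) (he : Measurable e)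
    (hs : MeasurableSet e.source) (ht : MeasurableSet e.target) {S' : E → E →L[ℝ] E}
    (hS' : ∀ w ∈ e.target, HasFDerivWithinAt e.symm (S' w) e.target w) (f : E → ℝ≥0∞) :
    (μ.withDensity (e.source.indicator f)).map e =
      μ.withDensity (e.target.indicator fun w => ENNReal.ofReal |(S' w).det| * f (e.symm w)) := by
  ext A hA
  rw [Measure.map_apply he hA, withDensity_apply _ (he hA), withDensity_apply _ hA,
    lintegral_indicator hs, lintegral_indicator ht, Measure.restrict_restrict hs,
    Measure.restrict_restrict ht, ← e.symm_image_target_inter_eq',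
    lintegral_image_eq_lintegral_abs_det_fderiv_mul μ (ht.inter hA)
      (fun w hw => (hS' w hw.1).mono inter_subset_left) (e.symm.injOn.mono inter_subset_left)]

end ChangeOfVariables

theorem withDensity_indicator_compl_singleton {α : Type*} [MeasurableSpace α]
    [MeasurableSingletonClass α] (μ : Measure α) [NullSingletonClass μ] (a : α) (f : α → ℝ≥0∞) :
    μ.withDensity (({a}ᶜ : Set α).indicator f) = μ.withDensity f := by
  rw [withDensity_indicator (measurableSet_singleton a).compl, restrict_compl_singleton]

theorem map_withDensity_add {α β : Type*} [MeasurableSpace α] [MeasurableSpace β] {μ : Measure α}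
    {T : α → β} {ν : Measure β} (hT : Measurable T) {f₁ f₂ : α → ℝ≥0∞} {g₁ g₂ : β → ℝ≥0∞}
    (hf₁ : Measurable f₁) (hg₁ : Measurable g₁) (h₁ : (μ.withDensity f₁).map T = ν.withDensity g₁)
    (h₂ : (μ.withDensity f₂).map T = ν.withDensity g₂) :
    (μ.withDensity (f₁ + f₂)).map T = ν.withDensity (g₁ + g₂) := by
  rw [withDensity_add_left hf₁, withDensity_add_left hg₁, Measure.map_add _ _ hT, h₁, h₂]

section Independence

variable {α β γ : Type*} [MeasurableSpace α] [MeasurableSpace β] [MeasurableSpace γ]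

theorem isProbabilityMeasure_withDensity {μ : Measure α} {g : α → ℝ≥0∞} (hg : ∫⁻ x, g x ∂μ = 1) :
    IsProbabilityMeasure (μ.withDensity g) :=
  ⟨by rw [withDensity_apply _ MeasurableSet.univ, Measure.restrict_univ, hg]⟩

theorem map_eq_prod_map_fst_map_snd {P : Measure γ} {f : γ → α × β} (hf : Measurable f)
    {μ : Measure α} {ν : Measure β} [IsProbabilityMeasure μ] [IsProbabilityMeasure ν]
    (h : P.map f = μ.prod ν) :
    P.map f = (P.map fun x => (f x).1).prod (P.map fun x => (f x).2) := by
  have h₁ : P.map (Prod.fst ∘ f) = μ := by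
    rw [← Measure.map_map measurable_fst hf, h, Measure.map_fst_prod, measure_univ, one_smul]
  have h₂ : P.map (Prod.snd ∘ f) = ν := by
    rw [← Measure.map_map measurable_snd hf, h, Measure.map_snd_prod, measure_univ, one_smul]
  exact h.trans (by rw [← h₁, ← h₂]; rfl)

theorem map_eq_prod_map_of_withDensity_eq_mul {P : Measure γ} {f : γ → α × β}
    (hf : Measurable f) {μ : Measure α} {ν : Measure β} [SFinite μ] [SFinite ν]
    {ρ : α × β → ℝ≥0∞} {g : α → ℝ≥0∞} {h : β → ℝ≥0∞} (hg : Measurable g) (hh : Measurable h)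
    (hg₁ : ∫⁻ x, g x ∂μ = 1) (hh₁ : ∫⁻ y, h y ∂ν = 1) (hρ : ∀ x, ρ x = g x.1 * h x.2)
    (hP : P.map f = (μ.prod ν).withDensity ρ) :
    P.map f = (P.map fun x => (f x).1).prod (P.map fun x => (f x).2) := by
  have := isProbabilityMeasure_withDensity hg₁
  have := isProbabilityMeasure_withDensity hh₁
  refine map_eq_prod_map_fst_map_snd hf (μ := μ.withDensity g) (ν := ν.withDensity h) (hP.trans ?_)
  rw [prod_withDensity hg hh]
  exact congrArg _ (funext hρ)

end Independence

theorem setLIntegral_Ioi_ofReal_deriv {G g : ℝ → ℝ} {a l : ℝ}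
    (hG : ∀ x ∈ Ici a, HasDerivAt G (g x) x) (hg : ∀ x ∈ Ioi a, 0 ≤ g x)
    (hlim : Tendsto G atTop (𝓝 l)) :
    ∫⁻ x in Ioi a, ENNReal.ofReal (g x) = ENNReal.ofReal (l - G a) := by
  rw [← ofReal_integral_eq_lintegral_ofReal (integrableOn_Ioi_deriv_of_nonneg' hG hg hlim)
    ((ae_restrict_mem measurableSet_Ioi).mono hg), integral_Ioi_of_hasDerivAt_of_nonneg' hG hg hlim]

theorem lintegral_indicator_Ioc_inv {a b : ℝ} (hab : a < b) :
    ∫⁻ x, (Ioc a b).indicator (fun _ => ENNReal.ofReal (b - a)⁻¹) x = 1 := by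
  rw [lintegral_indicator measurableSet_Ioc, setLIntegral_const, Real.volume_Ioc,
    ← ENNReal.ofReal_mul (inv_nonneg.2 (sub_pos.2 hab).le), inv_mul_cancel₀ (sub_pos.2 hab).ne',
    ENNReal.ofReal_one]

theorem measurable_polarMap : Measurable polarMap :=
  (by fun_prop : Measurable fun p : ℝ × ℝ => √(p.1 ^ 2 + p.2 ^ 2)).prodMk
    (Complex.measurable_arg.comp Complex.measurableEquivRealProd.symm.measurable)

theorem polarCoord_symm_fst_sq_add_snd_sq (w : ℝ × ℝ) :
    (polarCoord.symm w).1 ^ 2 + (polarCoord.symm w).2 ^ 2 = w.1 ^ 2 := by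
  rw [polarCoord_symm_apply, mul_pow, mul_pow, ← mul_add, cos_sq_add_sin_sq, mul_one]

/-- Unlike `polarCoord`, this keeps the negative real axis (with angle `π`), so that the target is
the whole half-open strip carrying the joint density and only the origin is discarded. -/
noncomputable def polarPartialEquiv : PartialEquiv (ℝ × ℝ) (ℝ × ℝ) where
  toFun := polarMap
  invFun := polarCoord.symm
  source := {0}ᶜ
  target := Ioi 0 ×ˢ Ioc (-π) π
  map_source' := by
    rintro ⟨x, y⟩ hxy
    refine ⟨?_, Complex.neg_pi_lt_arg _, Complex.arg_le_pi _⟩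
    simp only [mem_compl_iff, mem_singleton_iff, Prod.mk_eq_zero, not_and_or] at hxy
    have : 0 < x ^ 2 + y ^ 2 := by rcases hxy with h | h <;> positivity
    exact sqrt_pos.2 this
  map_target' := by
    rintro ⟨r, θ⟩ ⟨hr, -⟩ h
    have := polarCoord_symm_fst_sq_add_snd_sq (r, θ)
    rw [show polarCoord.symm (r, θ) = 0 from h] at this
    exact (ne_of_gt hr) (by simpa using this.symm)
  left_inv' := by
    rintro ⟨x, y⟩ -
    have h := Complex.norm_mul_cos_arg ⟨x, y⟩
    have h' := Complex.norm_mul_sin_arg ⟨x, y⟩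
    simp only [Complex.norm_def, Complex.normSq_mk] at h h'
    simp only [polarMap, polarCoord_symm_apply, Prod.mk.injEq, sq]
    exact ⟨h, h'⟩
  right_inv' := by
    rintro ⟨r, θ⟩ ⟨hr, hθ⟩
    have hsq := polarCoord_symm_fst_sq_add_snd_sq (r, θ)
    simp only [polarCoord_symm_apply] at hsq
    simp only [polarMap, polarCoord_symm_apply, hsq, sqrt_sq hr.le, Prod.mk.injEq, true_and]
    convert Complex.arg_mul_cos_add_sin_mul_I hr hθ using 2
    apply Complex.ext <;> simp [Complex.cos_ofReal_re, Complex.sin_ofReal_re]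

noncomputable def polarNormDens (x : ℝ × ℝ) : ℝ :=
  if 0 < x.1 ∧ -π < x.2 ∧ x.2 ≤ π then x.1 / (2 * π) * exp (-x.1 ^ 2 / 2) else 0

theorem map_polarMap_withDensity_normDens :
    (volume.withDensity fun p => ENNReal.ofReal (normDens p)).map polarMap =
      volume.withDensity fun x => ENNReal.ofReal (polarNormDens x) := by
  rw [← withDensity_indicator_compl_singleton volume 0]
  refine (map_withDensity_indicator_source volume polarPartialEquiv measurable_polarMap
    (measurableSet_singleton 0).compl (measurableSet_Ioi.prod measurableSet_Ioc)
    (fun w _ => (hasFDerivAt_polarCoord_symm w).hasFDerivWithinAt) _).trans ?_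
  congr with ⟨r, θ⟩
  simp only [polarPartialEquiv, PartialEquiv.coe_symm_mk, indicator_apply, mem_prod, mem_Ioi,
    mem_Ioc, det_fderivPolarCoordSymm, polarNormDens]
  split_ifs with h
  · rw [abs_of_pos h.1, ← ENNReal.ofReal_mul h.1.le, normDens, polarCoord_symm_fst_sq_add_snd_sq]
    congr 1
    ring
  · exact ENNReal.ofReal_zero.symm

theorem ofReal_polarNormDens_eq_mul (x : ℝ × ℝ) :
    ENNReal.ofReal (polarNormDens x) =
      (Ioi 0).indicator (fun r => ENNReal.ofReal (r * exp (-r ^ 2 / 2))) x.1 *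
        (Ioc (-π) π).indicator (fun _ => ENNReal.ofReal (π - -π)⁻¹) x.2 := by
  obtain ⟨r, θ⟩ := x
  simp only [polarNormDens, indicator_apply, mem_Ioi, mem_Ioc]
  split_ifs
  · rw [← ENNReal.ofReal_mul (by positivity)]
    congr 1
    ring
  all_goals simp_all

theorem lintegral_indicator_Ioi_mul_exp_neg_sq :
    ∫⁻ r, (Ioi 0).indicator (fun r => ENNReal.ofReal (r * exp (-r ^ 2 / 2))) r = 1 := by
  have hG (r : ℝ) (_ : r ∈ Ici 0) :
      HasDerivAt (fun r => -exp (-r ^ 2 / 2)) (r * exp (-r ^ 2 / 2)) r :=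
    (((hasDerivAt_pow 2 r).fun_neg.div_const 2).exp).fun_neg.congr_deriv (by push_cast; ring)
  have hlim : Tendsto (fun r : ℝ => -exp (-r ^ 2 / 2)) atTop (𝓝 0) := by
    have : Tendsto (fun r : ℝ => -r ^ 2 / 2) atTop atBot :=
      (tendsto_neg_atTop_atBot.comp (tendsto_pow_atTop two_ne_zero)).atBot_div_const two_pos
    simpa using (tendsto_exp_atBot.comp this).neg
  rw [lintegral_indicator measurableSet_Ioi,
    setLIntegral_Ioi_ofReal_deriv hG (fun r hr => mul_nonneg (le_of_lt hr) (exp_pos _).le) hlim]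
  simp

theorem measurable_l1PolarMap : Measurable l1PolarMap := by
  unfold l1PolarMap
  refine Measurable.prodMk (by fun_prop) (Measurable.mul ?_ (by fun_prop))
  exact Measurable.ite (measurableSet_le measurable_const measurable_snd) measurable_const
    measurable_const

theorem l1PolarMap_of_nonneg {p : ℝ × ℝ} (hp : 0 ≤ p.2) :
    l1PolarMap p = (|p.1| + |p.2|, 1 - p.1 / (|p.1| + |p.2|)) := by
  rw [l1PolarMap, if_pos hp, one_mul]

theorem l1PolarMap_of_neg {p : ℝ × ℝ} (hp : p.2 < 0) :
    l1PolarMap p = (|p.1| + |p.2|, -(1 - p.1 / (|p.1| + |p.2|))) := by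
  rw [l1PolarMap, if_neg hp.not_ge, neg_one_mul]

def radialAffine (a b c d : ℝ) (w : ℝ × ℝ) : ℝ × ℝ :=
  (w.1 * (a + b * w.2), w.1 * (c + d * w.2))

noncomputable def fderivRadialAffine (a b c d : ℝ) (w : ℝ × ℝ) : ℝ × ℝ →L[ℝ] ℝ × ℝ :=
  (Matrix.toLin (.finTwoProd ℝ) (.finTwoProd ℝ)
    !![a + b * w.2, w.1 * b; c + d * w.2, w.1 * d]).toContinuousLinearMap

theorem hasFDerivAt_radialAffine (a b c d : ℝ) (w : ℝ × ℝ) :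
    HasFDerivAt (radialAffine a b c d) (fderivRadialAffine a b c d w) w := by
  have ha : HasDerivAt (fun q : ℝ => a + b * q) b w.2 := by
    simpa using ((hasDerivAt_id w.2).const_mul b).const_add a
  have hc : HasDerivAt (fun q : ℝ => c + d * q) d w.2 := by
    simpa using ((hasDerivAt_id w.2).const_mul d).const_add c
  rw [fderivRadialAffine, Matrix.toLin_finTwoProd_toContinuousLinearMap]
  refine (HasFDerivAt.prodMk (𝕜 := ℝ)
    (hasFDerivAt_fst.mul (ha.comp_hasFDerivAt w hasFDerivAt_snd))
    (hasFDerivAt_fst.mul (hc.comp_hasFDerivAt w hasFDerivAt_snd))).congr_fderiv ?_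
  ext <;> simp [smul_smul, add_comm, mul_comm]

theorem det_fderivRadialAffine (a b c d : ℝ) (w : ℝ × ℝ) :
    (fderivRadialAffine a b c d w).det = w.1 * (a * d - b * c) := by
  simp only [fderivRadialAffine, LinearMap.det_toContinuousLinearMap, LinearMap.det_toLin,
    Matrix.det_fin_two_of]
  ring

theorem map_l1PolarMap_withDensity_indicator_lapDens (e : PartialEquiv (ℝ × ℝ) (ℝ × ℝ))
    {a b c d : ℝ} (hdet : a * d - b * c = 1) (he : ⇑e = l1PolarMap)
    (he' : ⇑e.symm = radialAffine a b c d) (hs : MeasurableSet e.source)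
    (ht : MeasurableSet e.target) (ht₀ : e.target ⊆ Ioi 0 ×ˢ univ) :
    (volume.withDensity (e.source.indicator fun p => ENNReal.ofReal (lapDens p))).map l1PolarMap =
      volume.withDensity (e.target.indicator fun w => ENNReal.ofReal (w.1 / 4 * exp (-w.1))) := by
  rw [← he, map_withDensity_indicator_source volume e (he ▸ measurable_l1PolarMap) hs ht
    (fun w _ => he' ▸ (hasFDerivAt_radialAffine a b c d w).hasFDerivWithinAt)]
  congr 1
  refine indicator_congr fun w hw => ?_
  have hr : 0 < w.1 := (ht₀ hw).1
  have hnorm : |(e.symm w).1| + |(e.symm w).2| = w.1 := by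
    conv_rhs => rw [← e.right_inv hw, he]
    rfl
  rw [det_fderivRadialAffine, hdet, mul_one, abs_of_pos hr, lapDens, hnorm,
    ← ENNReal.ofReal_mul hr.le]
  congr 1
  ring

/- The four quadrants are closed on one side so that they partition `ℝ² \ {0}` and their images
partition `(0, ∞) × (-2, 2]`. -/
noncomputable def l1PolarQuadrant₁ : PartialEquiv (ℝ × ℝ) (ℝ × ℝ) where
  toFun := l1PolarMap
  invFun := radialAffine 1 (-1) 0 1
  source := (Ici 0 ×ˢ Ici 0) \ {0}
  target := Ioi 0 ×ˢ Icc 0 1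
  map_source' := by
    rintro ⟨x, y⟩ ⟨⟨hx, hy⟩, h0⟩
    simp only [mem_Ici] at hx hy
    have hr : 0 < x + y := by
      simp only [mem_singleton_iff, Prod.mk_eq_zero] at h0
      by_contra h
      exact h0 ⟨by linarith, by linarith⟩
    have ht : x = x / (x + y) * (x + y) := (div_mul_cancel₀ x hr.ne').symm
    rw [l1PolarMap_of_nonneg hy]
    simp only [abs_of_nonneg hx, abs_of_nonneg hy, mem_prod, mem_Ioi, mem_Icc]
    refine ⟨hr, ?_, ?_⟩ <;> nlinarith
  map_target' := by
    rintro ⟨r, q⟩ ⟨hr, hq⟩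
    simp only [mem_Ioi, mem_Icc] at hr hq
    refine ⟨⟨?_, ?_⟩, fun h => ?_⟩
    · simp only [radialAffine, mem_Ici]; nlinarith
    · simp only [radialAffine, mem_Ici]; nlinarith
    · simp only [radialAffine, mem_singleton_iff, Prod.mk_eq_zero] at h
      nlinarith
  left_inv' := by
    rintro ⟨x, y⟩ ⟨⟨hx, hy⟩, h0⟩
    simp only [mem_Ici] at hx hy
    have hr : x + y ≠ 0 := by
      simp only [mem_singleton_iff, Prod.mk_eq_zero] at h0
      intro h
      exact h0 ⟨by linarith, by linarith⟩
    rw [l1PolarMap_of_nonneg hy]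
    simp only [radialAffine, abs_of_nonneg hx, abs_of_nonneg hy, Prod.mk.injEq]
    constructor <;> field_simp <;> ring
  right_inv' := by
    rintro ⟨r, q⟩ ⟨hr, hq⟩
    simp only [mem_Ioi, mem_Icc] at hr hq
    have hx : 0 ≤ r * (1 + -1 * q) := by nlinarith
    have hy : 0 ≤ r * (0 + 1 * q) := by nlinarith
    rw [l1PolarMap_of_nonneg hy]
    simp only [radialAffine, abs_of_nonneg hx, abs_of_nonneg hy, Prod.mk.injEq]
    constructor <;> field_simp <;> ring

noncomputable def l1PolarQuadrant₂ : PartialEquiv (ℝ × ℝ) (ℝ × ℝ) where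
  toFun := l1PolarMap
  invFun := radialAffine 1 (-1) 2 (-1)
  source := Iio 0 ×ˢ Ici 0
  target := Ioi 0 ×ˢ Ioc 1 2
  map_source' := by
    rintro ⟨x, y⟩ ⟨hx, hy⟩
    simp only [mem_Iio, mem_Ici] at hx hy
    have hr : 0 < -x + y := by linarith
    have ht : x = x / (-x + y) * (-x + y) := (div_mul_cancel₀ x hr.ne').symm
    rw [l1PolarMap_of_nonneg hy]
    simp only [abs_of_neg hx, abs_of_nonneg hy, mem_prod, mem_Ioi, mem_Ioc]
    refine ⟨hr, ?_, ?_⟩ <;> nlinarith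
  map_target' := by
    rintro ⟨r, q⟩ ⟨hr, hq⟩
    simp only [mem_Ioi, mem_Ioc] at hr hq
    constructor
    · simp only [radialAffine, mem_Iio]; nlinarith
    · simp only [radialAffine, mem_Ici]; nlinarith
  left_inv' := by
    rintro ⟨x, y⟩ ⟨hx, hy⟩
    simp only [mem_Iio, mem_Ici] at hx hy
    have hr : -x + y ≠ 0 := by linarith
    rw [l1PolarMap_of_nonneg hy]
    simp only [radialAffine, abs_of_neg hx, abs_of_nonneg hy, Prod.mk.injEq]
    constructor <;> field_simp <;> ring
  right_inv' := by
    rintro ⟨r, q⟩ ⟨hr, hq⟩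
    simp only [mem_Ioi, mem_Ioc] at hr hq
    have hx : r * (1 + -1 * q) < 0 := by nlinarith
    have hy : 0 ≤ r * (2 + -1 * q) := by nlinarith
    rw [l1PolarMap_of_nonneg hy]
    simp only [radialAffine, abs_of_neg hx, abs_of_nonneg hy, Prod.mk.injEq]
    constructor <;> field_simp <;> ring

noncomputable def l1PolarQuadrant₃ : PartialEquiv (ℝ × ℝ) (ℝ × ℝ) where
  toFun := l1PolarMap
  invFun := radialAffine 1 1 (-2) (-1)
  source := Iic 0 ×ˢ Iio 0
  target := Ioi 0 ×ˢ Ioc (-2) (-1)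
  map_source' := by
    rintro ⟨x, y⟩ ⟨hx, hy⟩
    simp only [mem_Iic, mem_Iio] at hx hy
    have hr : 0 < -x + -y := by linarith
    have ht : x = x / (-x + -y) * (-x + -y) := (div_mul_cancel₀ x hr.ne').symm
    rw [l1PolarMap_of_neg hy]
    simp only [abs_of_nonpos hx, abs_of_neg hy, mem_prod, mem_Ioi, mem_Ioc]
    refine ⟨hr, ?_, ?_⟩ <;> nlinarith
  map_target' := by
    rintro ⟨r, q⟩ ⟨hr, hq⟩
    simp only [mem_Ioi, mem_Ioc] at hr hq
    constructor
    · simp only [radialAffine, mem_Iic]; nlinarith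
    · simp only [radialAffine, mem_Iio]; nlinarith
  left_inv' := by
    rintro ⟨x, y⟩ ⟨hx, hy⟩
    simp only [mem_Iic, mem_Iio] at hx hy
    have hr : -x + -y ≠ 0 := by linarith
    rw [l1PolarMap_of_neg hy]
    simp only [radialAffine, abs_of_nonpos hx, abs_of_neg hy, Prod.mk.injEq]
    constructor <;> field_simp <;> ring
  right_inv' := by
    rintro ⟨r, q⟩ ⟨hr, hq⟩
    simp only [mem_Ioi, mem_Ioc] at hr hq
    have hx : r * (1 + 1 * q) ≤ 0 := by nlinarith
    have hy : r * (-2 + -1 * q) < 0 := by nlinarith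
    rw [l1PolarMap_of_neg hy]
    simp only [radialAffine, abs_of_nonpos hx, abs_of_neg hy, Prod.mk.injEq]
    constructor <;> field_simp <;> ring

noncomputable def l1PolarQuadrant₄ : PartialEquiv (ℝ × ℝ) (ℝ × ℝ) where
  toFun := l1PolarMap
  invFun := radialAffine 1 1 0 1
  source := Ioi 0 ×ˢ Iio 0
  target := Ioi 0 ×ˢ Ioo (-1) 0
  map_source' := by
    rintro ⟨x, y⟩ ⟨hx, hy⟩
    simp only [mem_Ioi, mem_Iio] at hx hy
    have hr : 0 < x + -y := by linarith
    have ht : x = x / (x + -y) * (x + -y) := (div_mul_cancel₀ x hr.ne').symm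
    rw [l1PolarMap_of_neg hy]
    simp only [abs_of_pos hx, abs_of_neg hy, mem_prod, mem_Ioi, mem_Ioo]
    refine ⟨hr, ?_, ?_⟩ <;> nlinarith
  map_target' := by
    rintro ⟨r, q⟩ ⟨hr, hq⟩
    simp only [mem_Ioi, mem_Ioo] at hr hq
    constructor
    · simp only [radialAffine, mem_Ioi]; nlinarith
    · simp only [radialAffine, mem_Iio]; nlinarith
  left_inv' := by
    rintro ⟨x, y⟩ ⟨hx, hy⟩
    simp only [mem_Ioi, mem_Iio] at hx hy
    have hr : x + -y ≠ 0 := by linarith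
    rw [l1PolarMap_of_neg hy]
    simp only [radialAffine, abs_of_pos hx, abs_of_neg hy, Prod.mk.injEq]
    constructor <;> field_simp <;> ring
  right_inv' := by
    rintro ⟨r, q⟩ ⟨hr, hq⟩
    simp only [mem_Ioi, mem_Ioo] at hr hq
    have hx : 0 < r * (1 + 1 * q) := by nlinarith
    have hy : r * (0 + 1 * q) < 0 := by nlinarith
    rw [l1PolarMap_of_neg hy]
    simp only [radialAffine, abs_of_pos hx, abs_of_neg hy, Prod.mk.injEq]
    constructor <;> field_simp <;> ring

noncomputable def l1PolarLapDens (x : ℝ × ℝ) : ℝ :=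
  if 0 < x.1 ∧ -2 < x.2 ∧ x.2 ≤ 2 then x.1 / 4 * exp (-x.1) else 0

theorem indicator_compl_zero_eq_sum_l1PolarQuadrant (f : ℝ × ℝ → ℝ≥0∞) :
    ({0}ᶜ : Set (ℝ × ℝ)).indicator f =
      l1PolarQuadrant₁.source.indicator f + (l1PolarQuadrant₂.source.indicator f +
        (l1PolarQuadrant₃.source.indicator f + l1PolarQuadrant₄.source.indicator f)) := by
  ext ⟨x, y⟩
  simp only [Pi.add_apply, indicator_apply, l1PolarQuadrant₁, l1PolarQuadrant₂, l1PolarQuadrant₃,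
    l1PolarQuadrant₄, Set.mem_sdiff, mem_prod, mem_Ici, mem_Iic, mem_Ioi, mem_Iio, mem_compl_iff,
    mem_singleton_iff, Prod.mk_eq_zero]
  split_ifs <;> first | (exfalso; grind) | simp

theorem ofReal_l1PolarLapDens_eq_sum_l1PolarQuadrant :
    (fun x => ENNReal.ofReal (l1PolarLapDens x)) =
      l1PolarQuadrant₁.target.indicator (fun w => ENNReal.ofReal (w.1 / 4 * exp (-w.1))) +
      (l1PolarQuadrant₂.target.indicator (fun w => ENNReal.ofReal (w.1 / 4 * exp (-w.1))) +
      (l1PolarQuadrant₃.target.indicator (fun w => ENNReal.ofReal (w.1 / 4 * exp (-w.1))) +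
      l1PolarQuadrant₄.target.indicator (fun w => ENNReal.ofReal (w.1 / 4 * exp (-w.1))))) := by
  ext ⟨r, q⟩
  simp only [l1PolarLapDens, Pi.add_apply, indicator_apply, l1PolarQuadrant₁, l1PolarQuadrant₂,
    l1PolarQuadrant₃, l1PolarQuadrant₄, mem_prod, mem_Ioi, mem_Icc, mem_Ioc, mem_Ioo]
  split_ifs <;> first | (exfalso; grind) | simp

theorem map_l1PolarMap_withDensity_lapDens :
    (volume.withDensity fun p => ENNReal.ofReal (lapDens p)).map l1PolarMap =
      volume.withDensity fun x => ENNReal.ofReal (l1PolarLapDens x) := by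
  have hf : Measurable fun p => ENNReal.ofReal (lapDens p) := by unfold lapDens; fun_prop
  have hρ : Measurable fun w : ℝ × ℝ => ENNReal.ofReal (w.1 / 4 * exp (-w.1)) := by fun_prop
  have hs₁ : MeasurableSet l1PolarQuadrant₁.source :=
    (measurableSet_Ici.prod measurableSet_Ici).diff (measurableSet_singleton 0)
  have hs₂ : MeasurableSet l1PolarQuadrant₂.source := measurableSet_Iio.prod measurableSet_Ici
  have hs₃ : MeasurableSet l1PolarQuadrant₃.source := measurableSet_Iic.prod measurableSet_Iio
  have hs₄ : MeasurableSet l1PolarQuadrant₄.source := measurableSet_Ioi.prod measurableSet_Iio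
  have ht₁ : MeasurableSet l1PolarQuadrant₁.target := measurableSet_Ioi.prod measurableSet_Icc
  have ht₂ : MeasurableSet l1PolarQuadrant₂.target := measurableSet_Ioi.prod measurableSet_Ioc
  have ht₃ : MeasurableSet l1PolarQuadrant₃.target := measurableSet_Ioi.prod measurableSet_Ioc
  have ht₄ : MeasurableSet l1PolarQuadrant₄.target := measurableSet_Ioi.prod measurableSet_Ioo
  rw [← withDensity_indicator_compl_singleton volume 0, indicator_compl_zero_eq_sum_l1PolarQuadrant,
    ofReal_l1PolarLapDens_eq_sum_l1PolarQuadrant]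
  refine map_withDensity_add measurable_l1PolarMap (hf.indicator hs₁) (hρ.indicator ht₁)
    (map_l1PolarMap_withDensity_indicator_lapDens _ (a := 1) (b := -1) (c := 0) (d := 1) (by norm_num)
      rfl rfl hs₁ ht₁ fun _ hw => ⟨hw.1, trivial⟩) ?_
  refine map_withDensity_add measurable_l1PolarMap (hf.indicator hs₂) (hρ.indicator ht₂)
    (map_l1PolarMap_withDensity_indicator_lapDens _ (a := 1) (b := -1) (c := 2) (d := -1) (by norm_num)
      rfl rfl hs₂ ht₂ fun _ hw => ⟨hw.1, trivial⟩) ?_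
  exact map_withDensity_add measurable_l1PolarMap (hf.indicator hs₃) (hρ.indicator ht₃)
    (map_l1PolarMap_withDensity_indicator_lapDens _ (a := 1) (b := 1) (c := -2) (d := -1) (by norm_num)
      rfl rfl hs₃ ht₃ fun _ hw => ⟨hw.1, trivial⟩)
    (map_l1PolarMap_withDensity_indicator_lapDens _ (a := 1) (b := 1) (c := 0) (d := 1) (by norm_num)
      rfl rfl hs₄ ht₄ fun _ hw => ⟨hw.1, trivial⟩)

theorem ofReal_l1PolarLapDens_eq_mul (x : ℝ × ℝ) :
    ENNReal.ofReal (l1PolarLapDens x) =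
      (Ioi 0).indicator (fun r => ENNReal.ofReal (r * exp (-r))) x.1 *
        (Ioc (-2) 2).indicator (fun _ => ENNReal.ofReal (2 - -2)⁻¹) x.2 := by
  obtain ⟨r, q⟩ := x
  simp only [l1PolarLapDens, indicator_apply, mem_Ioi, mem_Ioc]
  split_ifs
  · rw [← ENNReal.ofReal_mul (by positivity)]
    congr 1
    ring
  all_goals simp_all

theorem lintegral_indicator_Ioi_mul_exp_neg :
    ∫⁻ r, (Ioi 0).indicator (fun r => ENNReal.ofReal (r * exp (-r))) r = 1 := by
  have hG (r : ℝ) (_ : r ∈ Ici 0) :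
      HasDerivAt (fun r => -((r + 1) * exp (-r))) (r * exp (-r)) r :=
    (((hasDerivAt_id' r).add_const 1).fun_mul (hasDerivAt_neg' r).exp).fun_neg.congr_deriv
      (by ring)
  have hlim : Tendsto (fun r : ℝ => -((r + 1) * exp (-r))) atTop (𝓝 0) := by
    have := (tendsto_pow_mul_exp_neg_atTop_nhds_zero 1).add
      (tendsto_exp_atBot.comp tendsto_neg_atTop_atBot)
    simpa [add_mul] using this.neg
  rw [lintegral_indicator measurableSet_Ioi,
    setLIntegral_Ioi_ofReal_deriv hG (fun r hr => mul_nonneg (le_of_lt hr) (exp_pos _).le) hlim]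
  simp

/-- If `X, Y` are independent standard normals, then `R = √(X²+Y²)` and `Θ = atan2(Y,X)` are
independent with joint density `(r/2π)·exp(-r²/2)`; if `X, Y` are independent standard Laplace,
then `R₁ = |X|+|Y|` and the `L¹` pseudo-angle `Q` are independent with joint density
`(r/4)·exp(-r)`. -/
theorem stmt2 :
    (Measure.map polarMap (Measure.withDensity volume (fun p => ENNReal.ofReal (normDens p)))
      = Measure.withDensity volume (fun x : ℝ × ℝ => ENNReal.ofReal
          (if 0 < x.1 ∧ -Real.pi < x.2 ∧ x.2 ≤ Real.pi
            then x.1 / (2 * Real.pi) * Real.exp (-x.1 ^ 2 / 2) else 0))) ∧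
    (Measure.map polarMap (Measure.withDensity volume (fun p => ENNReal.ofReal (normDens p)))
      = (Measure.map (fun p : ℝ × ℝ => Real.sqrt (p.1 ^ 2 + p.2 ^ 2))
            (Measure.withDensity volume (fun p => ENNReal.ofReal (normDens p)))).prod
          (Measure.map (fun p : ℝ × ℝ => Complex.arg ⟨p.1, p.2⟩)
            (Measure.withDensity volume (fun p => ENNReal.ofReal (normDens p))))) ∧
    (Measure.map l1PolarMap (Measure.withDensity volume (fun p => ENNReal.ofReal (lapDens p)))
      = Measure.withDensity volume (fun x : ℝ × ℝ => ENNReal.ofReal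
          (if 0 < x.1 ∧ -2 < x.2 ∧ x.2 ≤ 2
            then x.1 / 4 * Real.exp (-x.1) else 0))) ∧
    (Measure.map l1PolarMap (Measure.withDensity volume (fun p => ENNReal.ofReal (lapDens p)))
      = (Measure.map (fun p : ℝ × ℝ => |p.1| + |p.2|)
            (Measure.withDensity volume (fun p => ENNReal.ofReal (lapDens p)))).prod
          (Measure.map (fun p : ℝ × ℝ =>
              (if 0 ≤ p.2 then (1 : ℝ) else -1) * (1 - p.1 / (|p.1| + |p.2|)))
            (Measure.withDensity volume (fun p => ENNReal.ofReal (lapDens p))))) := by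
  have hπ : -π < π := by linarith [pi_pos]
  refine ⟨map_polarMap_withDensity_normDens, ?_, map_l1PolarMap_withDensity_lapDens, ?_⟩
  · exact map_eq_prod_map_of_withDensity_eq_mul measurable_polarMap
      ((by fun_prop : Measurable _).indicator measurableSet_Ioi)
      (measurable_const.indicator measurableSet_Ioc) lintegral_indicator_Ioi_mul_exp_neg_sq
      (lintegral_indicator_Ioc_inv hπ) ofReal_polarNormDens_eq_mul
      map_polarMap_withDensity_normDens
  · exact map_eq_prod_map_of_withDensity_eq_mul measurable_l1PolarMap
      ((by fun_prop : Measurable _).indicator measurableSet_Ioi)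
      (measurable_const.indicator measurableSet_Ioc) lintegral_indicator_Ioi_mul_exp_neg
      (lintegral_indicator_Ioc_inv (by norm_num)) ofReal_l1PolarLapDens_eq_mul
      map_l1PolarMap_withDensity_lapDens
end

section
/- Let (X,Y) be a random vector with joint density, let R_a = R_a(X,Y) and R_b = R_b(X,Y) be radii defined via two gauge functions with continuous star-shaped boundaries, and let Q be an angular variable defined via a third gauge function. If (R_a, Q) has joint density f_a, then (R_b, Q) has joint density f_b(r,q) = (R_a(w)/R_b(w))·f_a(r·R_a(w)/R_b(w), q), where w = (cos_*(q), sin_*(q)) is the point on the angular unit circle at pseudo-angle q. -/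
/-! For fixed angle `q` the map `r ↦ r * R_b(w q) / R_a(w q)` is a linear substitution in the
radius, so by Tonelli (integrating over `r` first) the density picks up the Jacobian factor
`R_a(w q) / R_b(w q)`. -/

open MeasureTheory
open scoped ENNReal

lemma lintegral_comp_mul_right {c : ℝ} (hc : c ≠ 0) (g : ℝ → ℝ≥0∞) :
    ∫⁻ r, g (r * c) = ENNReal.ofReal |c⁻¹| * ∫⁻ r, g r := by
  have h := (Homeomorph.mulRight₀ c hc).measurableEmbedding.lintegral_map (μ := volume) g
  rwa [Homeomorph.coe_mulRight₀, Real.map_volume_mul_right hc, lintegral_smul_measure,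
    smul_eq_mul, eq_comm] at h

section FiberwiseScaling

variable {β : Type*} [MeasurableSpace β] {ν : Measure β} [SFinite ν]
  {c : β → ℝ} (hc : Measurable c) (hc0 : ∀ y, c y ≠ 0)
include hc hc0

lemma lintegral_prod_comp_mul_fst {g : ℝ × β → ℝ≥0∞} (hg : Measurable g) :
    ∫⁻ p, g (p.1 * c p.2, p.2) ∂(volume.prod ν)
      = ∫⁻ p, ENNReal.ofReal |(c p.2)⁻¹| * g p ∂(volume.prod ν) := by
  rw [lintegral_prod_symm' (fun p => g (p.1 * c p.2, p.2))
      (hg.comp ((measurable_fst.mul (hc.comp measurable_snd)).prodMk measurable_snd)),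
    lintegral_prod_symm' (fun p => ENNReal.ofReal |(c p.2)⁻¹| * g p)
      ((hc.comp measurable_snd).inv.abs.ennreal_ofReal.mul hg)]
  exact lintegral_congr fun y => (lintegral_comp_mul_right (hc0 y) fun r => g (r, y)).trans
    (lintegral_const_mul' _ _ ENNReal.ofReal_ne_top).symm

theorem map_withDensity_prod_mul_fst {f : ℝ × β → ℝ≥0∞} (hf : Measurable f) :
    ((volume.prod ν).withDensity f).map (fun p => (p.1 * c p.2, p.2))
      = (volume.prod ν).withDensity
          (fun p => ENNReal.ofReal |(c p.2)⁻¹| * f (p.1 / c p.2, p.2)) := by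
  have hT : Measurable fun p : ℝ × β => (p.1 * c p.2, p.2) :=
    (measurable_fst.mul (hc.comp measurable_snd)).prodMk measurable_snd
  have hf_div : Measurable fun p : ℝ × β => f (p.1 / c p.2, p.2) :=
    hf.comp ((measurable_fst.div (hc.comp measurable_snd)).prodMk measurable_snd)
  have hdens : Measurable fun p : ℝ × β => ENNReal.ofReal |(c p.2)⁻¹| * f (p.1 / c p.2, p.2) :=
    (hc.comp measurable_snd).inv.abs.ennreal_ofReal.mul hf_div
  refine Measure.ext_of_lintegral _ fun φ hφ => ?_
  rw [lintegral_map hφ hT, lintegral_withDensity_eq_lintegral_mul _ hf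
      (g := fun p => φ (p.1 * c p.2, p.2)) (hφ.comp hT),
    lintegral_withDensity_eq_lintegral_mul _ hdens hφ]
  simp only [Pi.mul_apply, mul_assoc]
  rw [← lintegral_prod_comp_mul_fst hc hc0 (g := fun p => f (p.1 / c p.2, p.2) * φ p)
    (hf_div.mul hφ)]
  simp only [mul_div_cancel_right₀ _ (hc0 _)]

end FiberwiseScaling

theorem stmt7_general (Ra Rb : ℝ × ℝ → ℝ) (w : ℝ → ℝ × ℝ)
    (hRa_cont : Continuous Ra) (hRb_cont : Continuous Rb)
    (hRa_pos : ∀ q, 0 < Ra (w q)) (hRb_pos : ∀ q, 0 < Rb (w q))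
    (hw_meas : Measurable w)
    (fa : ℝ → ℝ → ℝ)
    (hfa : Measurable (fun p : ℝ × ℝ => fa p.1 p.2)) :
    Measure.map (fun p : ℝ × ℝ => (p.1 * Rb (w p.2) / Ra (w p.2), p.2))
        (Measure.withDensity volume (fun p : ℝ × ℝ => ENNReal.ofReal (fa p.1 p.2)))
      = Measure.withDensity volume (fun p : ℝ × ℝ => ENNReal.ofReal
          ((Ra (w p.2) / Rb (w p.2)) * fa (p.1 * Ra (w p.2) / Rb (w p.2)) p.2)) := by
  have hc_pos : ∀ q, 0 < Rb (w q) / Ra (w q) := fun q => div_pos (hRb_pos q) (hRa_pos q)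
  have hc : Measurable fun q => Rb (w q) / Ra (w q) :=
    (hRb_cont.measurable.comp hw_meas).div (hRa_cont.measurable.comp hw_meas)
  have key := map_withDensity_prod_mul_fst (ν := volume) hc (fun q => (hc_pos q).ne')
    hfa.ennreal_ofReal
  simp only [← mul_div_assoc, div_div_eq_mul_div] at key
  rw [Measure.volume_eq_prod, key]
  congr 1
  funext p
  rw [abs_of_pos (inv_pos.mpr (hc_pos p.2)), inv_div,
    ENNReal.ofReal_mul (div_pos (hRa_pos p.2) (hRb_pos p.2)).le]

/-- Change of radial variable (Lemma on radius change): if `(R_a, Q)` has joint density `f_a`,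
where `R_a, R_b` are radii defined via gauge functions (positively homogeneous of degree 1,
positive on the angular boundary) and `Q` is an angular variable with boundary point
`w(q)` (normalized so `R_ang(w q) = 1`), then `(R_b, Q)` has joint density
`f_b(r,q) = (R_a(w q)/R_b(w q))·f_a(r·R_a(w q)/R_b(w q), q)`.  Formulated as a
pushforward identity under `(r,q) ↦ (r·R_b(w q)/R_a(w q), q)`. -/
theorem stmt7 (Ra Rb Rang : ℝ × ℝ → ℝ) (w : ℝ → ℝ × ℝ)
    (hRa_hom : ∀ t : ℝ, 0 < t → ∀ x : ℝ × ℝ, Ra (t • x) = t * Ra x)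
    (hRb_hom : ∀ t : ℝ, 0 < t → ∀ x : ℝ × ℝ, Rb (t • x) = t * Rb x)
    (hRa_cont : Continuous Ra) (hRb_cont : Continuous Rb)
    (hRa_pos : ∀ q, 0 < Ra (w q)) (hRb_pos : ∀ q, 0 < Rb (w q))
    (hw_meas : Measurable w)
    (hang : ∀ q, Rang (w q) = 1)
    (fa : ℝ → ℝ → ℝ)
    (hfa : Measurable (fun p : ℝ × ℝ => fa p.1 p.2))
    (hfann : ∀ r q, 0 ≤ fa r q) :
    Measure.map (fun p : ℝ × ℝ => (p.1 * Rb (w p.2) / Ra (w p.2), p.2))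
        (Measure.withDensity volume (fun p : ℝ × ℝ => ENNReal.ofReal (fa p.1 p.2)))
      = Measure.withDensity volume (fun p : ℝ × ℝ => ENNReal.ofReal
          ((Ra (w p.2) / Rb (w p.2)) * fa (p.1 * Ra (w p.2) / Rb (w p.2)) p.2)) :=
  stmt7_general Ra Rb w hRa_cont hRb_cont hRa_pos hRb_pos hw_meas fa hfa
end

section
/- Let C be a d-dimensional copula with tail order 1 in the corner u₀, i.e., C_{u₀}(t·1_d) ~ L(t)·t as t → 0⁺. Suppose C admits an exponent function Λ: [0,∞)^d → [0,∞) with C_{u₀}(t^{z₁},...,t^{z_d}) ~ L(t;z)·t^{Λ(z)} as t → 0⁺ for slowly varying L(·;z). Then Λ(z₁,...,z_d) = max(z₁,...,z_d) for all z ∈ [0,∞)^d. -/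
/-!
For `t ∈ (0, 1]` and `m = max zᵢ`, monotonicity and the uniform margins squeeze
`C(t^{z₁},…,t^{z_d})` between the diagonal value `C(t^m,…,t^m) ~ L(t^m) t^m` and `t^m`.
Both bounds are of the form (positive slowly varying) `· t^m`, and a slowly varying function
cannot be dominated by a positive power `t^δ`: halving `t` multiplies `N(t) / t^δ` by roughly
`2^δ > 1`, so `N(t) / t^δ` is unbounded along `t₀ 2⁻ⁿ`. Comparing with
`C(t^{z₁},…,t^{z_d}) ~ M(z)(t) t^{Λ(z)}` therefore forces `Λ(z) = m`.
-/

open Filter Set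

/-- `L` is slowly varying at `0⁺`. -/
def SlowlyVaryingAtZero (L : ℝ → ℝ) : Prop :=
  ∀ c : ℝ, 0 < c →
    Filter.Tendsto (fun x => L (c * x) / L x) (nhdsWithin 0 (Set.Ioi 0)) (nhds 1)

open Topology

theorem tendsto_rpow_nhdsGT_zero {m : ℝ} (hm : 0 < m) :
    Tendsto (fun t : ℝ => t ^ m) (𝓝[>] 0) (𝓝[>] 0) := by
  refine tendsto_nhdsWithin_of_tendsto_nhds_of_eventually_within _ ?_ ?_
  · simpa [Real.zero_rpow hm.ne'] using
      ((Real.continuousAt_rpow_const 0 m (Or.inr hm.le)).tendsto).mono_left nhdsWithin_le_nhds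
  · filter_upwards [self_mem_nhdsWithin] with t (ht : 0 < t)
    exact Real.rpow_pos_of_pos ht m

theorem eventually_le_two_mul_of_tendsto_div_one {f g : ℝ → ℝ} {l : Filter ℝ}
    (hg : ∀ᶠ t in l, 0 < g t) (h : Tendsto (fun t => f t / g t) l (𝓝 1)) :
    ∀ᶠ t in l, g t ≤ 2 * f t ∧ f t ≤ 2 * g t := by
  filter_upwards [h.eventually (Ioo_mem_nhds (by norm_num : (2⁻¹ : ℝ) < 1) one_lt_two), hg]
    with t ⟨hlo, hhi⟩ hgt
  rw [lt_div_iff₀ hgt] at hlo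
  rw [div_lt_iff₀ hgt] at hhi
  constructor <;> linarith

namespace SlowlyVaryingAtZero

variable {N N₁ N₂ : ℝ → ℝ}

theorem one : SlowlyVaryingAtZero fun _ => 1 := fun _ _ => by
  simpa only [div_one] using tendsto_const_nhds

theorem div (h₁ : SlowlyVaryingAtZero N₁) (h₂ : SlowlyVaryingAtZero N₂) :
    SlowlyVaryingAtZero fun t => N₁ t / N₂ t := fun c hc => by
  have h := (h₁ c hc).div (h₂ c hc) one_ne_zero
  rw [div_one] at h
  exact h.congr fun t => div_div_div_comm _ _ _ _

theorem comp_rpow (hN : SlowlyVaryingAtZero N) {m : ℝ} (hm : 0 < m) :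
    SlowlyVaryingAtZero fun t => N (t ^ m) := fun c hc => by
  refine ((hN (c ^ m) (by positivity)).comp (tendsto_rpow_nhdsGT_zero hm)).congr' ?_
  filter_upwards [self_mem_nhdsWithin] with t (ht : 0 < t)
  simp only [Function.comp_apply, Real.mul_rpow hc.le ht.le]

theorem not_eventually_le_mul_rpow (hN : SlowlyVaryingAtZero N) (hpos : ∀ t, 0 < t → 0 < N t)
    {δ : ℝ} (hδ : 0 < δ) (K : ℝ) : ¬∀ᶠ t in 𝓝[>] 0, N t ≤ K * t ^ δ := by
  intro hle
  set g : ℝ → ℝ := fun t => N t / t ^ δ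
  have hgpos : ∀ t, 0 < t → 0 < g t := fun t ht => div_pos (hpos t ht) (by positivity)
  have hhalf : Tendsto (fun t => g (2⁻¹ * t) / g t) (𝓝[>] 0) (𝓝 (2 ^ δ)) := by
    have h := (hN 2⁻¹ (by norm_num)).mul_const ((2 : ℝ) ^ δ)
    rw [one_mul] at h
    refine h.congr' ?_
    filter_upwards [self_mem_nhdsWithin] with t (ht : 0 < t)
    simp only [g, Real.mul_rpow (by norm_num : (0 : ℝ) ≤ 2⁻¹) ht.le,
      Real.inv_rpow (by norm_num : (0 : ℝ) ≤ 2)]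
    field_simp
  obtain ⟨q, hq1, hq⟩ := exists_between (Real.one_lt_rpow one_lt_two hδ)
  have hev : ∀ᶠ t in 𝓝[>] 0, q * g t ≤ g (2⁻¹ * t) ∧ g t ≤ K := by
    filter_upwards [hhalf.eventually (eventually_gt_nhds hq), hle, self_mem_nhdsWithin]
      with t hqt hNt (ht : 0 < t)
    exact ⟨((lt_div_iff₀ (hgpos t ht)).mp hqt).le, (div_le_iff₀ (by positivity)).mpr hNt⟩
  obtain ⟨ε, hε : 0 < ε, hsub⟩ := mem_nhdsGT_iff_exists_Ioo_subset.mp hev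
  have hmem : ∀ n : ℕ, ε / 2 * 2⁻¹ ^ n ∈ Ioo 0 ε := fun n =>
    ⟨by positivity, by
      have : (2⁻¹ : ℝ) ^ n ≤ 1 := pow_le_one₀ (by norm_num) (by norm_num)
      nlinarith⟩
  have hunbdd : Tendsto (fun n : ℕ => g (ε / 2 * 2⁻¹ ^ n)) atTop atTop := by
    refine tendsto_atTop_of_geom_le (hgpos _ (hmem 0).1) hq1 fun n => ?_
    simpa only [pow_succ, mul_assoc, mul_comm (2⁻¹ : ℝ)] using (hsub (hmem n)).1
  obtain ⟨n, hn⟩ := (hunbdd.eventually_gt_atTop K).exists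
  exact (hsub (hmem n)).2.not_gt hn

theorem le_of_eventually_mul_rpow_le (hN₁ : SlowlyVaryingAtZero N₁)
    (hN₂ : SlowlyVaryingAtZero N₂) (hpos₁ : ∀ t, 0 < t → 0 < N₁ t)
    (hpos₂ : ∀ t, 0 < t → 0 < N₂ t) {a b K : ℝ}
    (h : ∀ᶠ t in 𝓝[>] 0, N₁ t * t ^ a ≤ K * (N₂ t * t ^ b)) : b ≤ a := by
  by_contra! hab
  refine (hN₁.div hN₂).not_eventually_le_mul_rpow
    (fun t ht => div_pos (hpos₁ t ht) (hpos₂ t ht)) (sub_pos.2 hab) K ?_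
  filter_upwards [h, self_mem_nhdsWithin] with t ht (htpos : 0 < t)
  have : 0 < t ^ a := by positivity
  rw [Real.rpow_sub htpos, div_le_iff₀ (hpos₂ t htpos), mul_div_assoc', div_mul_eq_mul_div,
    le_div_iff₀ this]
  linarith

end SlowlyVaryingAtZero

section Copula

variable {d : ℕ} {C : (Fin d → ℝ) → ℝ}

def HasUniformMargins (C : (Fin d → ℝ) → ℝ) : Prop :=
  ∀ i : Fin d, ∀ t ∈ Set.Icc (0 : ℝ) 1, C (Function.update (fun _ => (1 : ℝ)) i t) = t

theorem HasUniformMargins.apply_one [Nonempty (Fin d)] (hC : HasUniformMargins C) :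
    C (fun _ => 1) = 1 := by
  obtain ⟨i⟩ := ‹Nonempty (Fin d)›
  simpa only [Function.update_eq_self] using hC i 1 ⟨zero_le_one, le_rfl⟩

theorem HasUniformMargins.apply_le (hmono : Monotone C) (hC : HasUniformMargins C)
    {u : Fin d → ℝ} (hu : ∀ k, u k ≤ 1) {i : Fin d} (hi : 0 ≤ u i) : C u ≤ u i := by
  calc C u ≤ C (Function.update (fun _ => 1) i (u i)) := hmono fun k => by
        rcases eq_or_ne k i with rfl | hki
        · simp
        · simpa [Function.update_of_ne hki] using hu k
    _ = u i := hC i (u i) ⟨hi, hu i⟩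

theorem HasUniformMargins.exists_slowlyVarying_le_diag [Nonempty (Fin d)]
    (hC : HasUniformMargins C) {L : ℝ → ℝ} (hL : SlowlyVaryingAtZero L)
    (hLpos : ∀ t, 0 < t → 0 < L t)
    (htail : Tendsto (fun t => C (fun _ => t) / (L t * t)) (𝓝[>] 0) (𝓝 1))
    {m : ℝ} (hm : 0 ≤ m) :
    ∃ N, SlowlyVaryingAtZero N ∧ (∀ t, 0 < t → 0 < N t) ∧
      ∀ᶠ t in 𝓝[>] 0, N t * t ^ m ≤ 2 * C (fun _ => t ^ m) := by
  rcases hm.eq_or_lt with rfl | hm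
  · refine ⟨fun _ => 1, .one, fun _ _ => one_pos, .of_forall fun t => ?_⟩
    simp only [Real.rpow_zero, hC.apply_one]
    norm_num
  · refine ⟨fun t => L (t ^ m), hL.comp_rpow hm, fun t ht => hLpos _ (by positivity), ?_⟩
    refine (eventually_le_two_mul_of_tendsto_div_one ?_
      (htail.comp (tendsto_rpow_nhdsGT_zero hm))).mono fun t ht => ht.1
    filter_upwards [self_mem_nhdsWithin] with t (ht : 0 < t)
    exact mul_pos (hLpos _ (by positivity)) (by positivity)

theorem HasUniformMargins.apply_rpow_mem_Icc (hmono : Monotone C) (hC : HasUniformMargins C)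
    {z : Fin d → ℝ} (hz : ∀ i, 0 ≤ z i) {j : Fin d} (hj : ∀ i, z i ≤ z j) {t : ℝ}
    (ht : t ∈ Ioc 0 1) :
    C (fun i => t ^ z i) ∈ Icc (C fun _ => t ^ z j) (t ^ z j) :=
  ⟨hmono fun i => Real.rpow_le_rpow_of_exponent_ge ht.1 ht.2 (hj i),
    hC.apply_le hmono (fun i => Real.rpow_le_one ht.1.le ht.2 (hz i)) (Real.rpow_nonneg ht.1.le _)⟩

end Copula

/-- If a `d`-dimensional copula `C` (here `C = C_{u₀}`, itself a copula: monotone with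
uniform margins) has tail order 1, i.e. `C(t·1_d) ~ L(t)·t` as `t → 0⁺`, and admits an
exponent function `Λ` with `C(t^{z₁},...,t^{z_d}) ~ M(z)(t)·t^{Λ(z)}` as `t → 0⁺` for
slowly varying `M(z)`, then `Λ(z) = max(z₁,...,z_d)` for all `z ∈ [0,∞)^d`. -/
theorem stmt10 (d : ℕ) (hd : 0 < d) (C : (Fin d → ℝ) → ℝ)
    (hmono : Monotone C)
    (hmargin : ∀ i : Fin d, ∀ t ∈ Set.Icc (0 : ℝ) 1,
      C (Function.update (fun _ => (1 : ℝ)) i t) = t)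
    (L : ℝ → ℝ) (hL : SlowlyVaryingAtZero L) (hLpos : ∀ x : ℝ, 0 < x → 0 < L x)
    (htail : Filter.Tendsto (fun t => C (fun _ => t) / (L t * t))
      (nhdsWithin 0 (Set.Ioi 0)) (nhds 1))
    (Λ : (Fin d → ℝ) → ℝ) (M : (Fin d → ℝ) → ℝ → ℝ)
    (hM : ∀ z : Fin d → ℝ, (∀ i, 0 ≤ z i) →
      SlowlyVaryingAtZero (M z) ∧ ∀ t : ℝ, 0 < t → 0 < M z t)
    (hΛ : ∀ z : Fin d → ℝ, (∀ i, 0 ≤ z i) →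
      Filter.Tendsto (fun t : ℝ => C (fun i => t ^ z i) / (M z t * t ^ Λ z))
        (nhdsWithin 0 (Set.Ioi 0)) (nhds 1)) :
    ∀ z : Fin d → ℝ, (∀ i, 0 ≤ z i) → Λ z = ⨆ i, z i := by
  intro z hz
  have : Nonempty (Fin d) := ⟨⟨0, hd⟩⟩
  obtain ⟨j, hj⟩ := Finite.exists_max z
  rw [le_antisymm (ciSup_le hj) (le_ciSup (finite_range z).bddAbove j)]
  have hC : HasUniformMargins C := hmargin
  obtain ⟨hMsv, hMpos⟩ := hM z hz
  obtain ⟨N, hNsv, hNpos, hdiag⟩ := hC.exists_slowlyVarying_le_diag hL hLpos htail (hz j)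
  have hasymp := eventually_le_two_mul_of_tendsto_div_one
    (eventually_mem_nhdsWithin.mono fun t (ht : 0 < t) => mul_pos (hMpos t ht) (by positivity))
    (hΛ z hz)
  have hbounds : ∀ᶠ t in 𝓝[>] 0, C (fun i => t ^ z i) ∈ Icc (C fun _ => t ^ z j) (t ^ z j) :=
    eventually_of_mem (Ioc_mem_nhdsGT one_pos) fun t => hC.apply_rpow_mem_Icc hmono hz hj
  apply le_antisymm
  · refine hNsv.le_of_eventually_mul_rpow_le hMsv hNpos hMpos (K := 4) ?_
    filter_upwards [hasymp, hbounds, hdiag] with t ⟨_, hup⟩ ⟨hlo, _⟩ hNt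
    linarith
  · refine hMsv.le_of_eventually_mul_rpow_le .one hMpos (fun _ _ => one_pos) (K := 2) ?_
    filter_upwards [hasymp, hbounds] with t ⟨hlo, _⟩ ⟨_, hup⟩
    linarith
end

section
/- For the bivariate exponential copula C(u,v) = uv·exp(-α·log(u)·log(v)) with parameter α ∈ (0,1], the lower tail order is infinite: for x > 0, lim_{t→0⁺} C(xt, xt)/C(t,t) equals 0 if x < 1, equals 1 if x = 1, and equals ∞ if x > 1; hence C(t,t) is rapidly varying at 0⁺. -/
open Filter Set

/-- The bivariate exponential copula `C(u,v) = uv·exp(-α log(u) log(v))`. -/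
noncomputable def bivExpC (α u v : ℝ) : ℝ :=
  u * v * Real.exp (-α * Real.log u * Real.log v)

lemma bivExpC_ratio (α x t : ℝ) (hx : 0 < x) (ht : 0 < t) :
    bivExpC α (x * t) (x * t) / bivExpC α t t
      = x ^ 2 * Real.exp (-α * Real.log x * Real.log x)
        * Real.exp ((-2 * α * Real.log x) * Real.log t) := by
  unfold bivExpC
  rw [Real.log_mul hx.ne' ht.ne']
  rw [div_eq_iff (by positivity)]
  have h : (-α * (Real.log x + Real.log t) * (Real.log x + Real.log t))
      = (-α * Real.log x * Real.log x) + ((-2 * α * Real.log x) * Real.log t)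
        + (-α * Real.log t * Real.log t) := by ring
  rw [h, Real.exp_add, Real.exp_add]
  ring

/-- For the bivariate exponential copula with `α ∈ (0,1]`, the lower tail order is infinite:
for `x > 0`, `C(xt,xt)/C(t,t)` tends to `0` if `x < 1`, to `1` if `x = 1`, and to `∞` if
`x > 1`, as `t → 0⁺`; hence `C(t,t)` is rapidly varying at `0⁺`. -/
theorem stmt16 (α : ℝ) (hα : α ∈ Set.Ioc (0 : ℝ) 1) (x : ℝ) (hx : 0 < x) :
    (x < 1 → Filter.Tendsto (fun t : ℝ => bivExpC α (x * t) (x * t) / bivExpC α t t)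
      (nhdsWithin 0 (Set.Ioi 0)) (nhds 0)) ∧
    (x = 1 → Filter.Tendsto (fun t : ℝ => bivExpC α (x * t) (x * t) / bivExpC α t t)
      (nhdsWithin 0 (Set.Ioi 0)) (nhds 1)) ∧
    (1 < x → Filter.Tendsto (fun t : ℝ => bivExpC α (x * t) (x * t) / bivExpC α t t)
      (nhdsWithin 0 (Set.Ioi 0)) Filter.atTop) := by
  obtain ⟨hα0, hα1⟩ := hα
  have hlog : Filter.Tendsto Real.log (nhdsWithin 0 (Set.Ioi (0:ℝ))) atBot :=
    Real.tendsto_log_nhdsGT_zero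
  have heq : (fun t : ℝ => bivExpC α (x * t) (x * t) / bivExpC α t t)
      =ᶠ[nhdsWithin 0 (Set.Ioi (0:ℝ))]
      (fun t : ℝ => x ^ 2 * Real.exp (-α * Real.log x * Real.log x)
        * Real.exp ((-2 * α * Real.log x) * Real.log t)) := by
    filter_upwards [self_mem_nhdsWithin] with t ht
    exact bivExpC_ratio α x t hx ht
  refine ⟨?_, ?_, ?_⟩
  · intro hx1
    have hc : 0 < -2 * α * Real.log x := by
      have := Real.log_neg hx hx1
      nlinarith
    have h1 : Filter.Tendsto (fun t : ℝ => (-2 * α * Real.log x) * Real.log t)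
        (nhdsWithin 0 (Set.Ioi 0)) atBot :=
      (tendsto_const_mul_atBot_of_pos hc).mpr hlog
    have h2 := Real.tendsto_exp_atBot.comp h1
    have h3 := h2.const_mul (x ^ 2 * Real.exp (-α * Real.log x * Real.log x))
    rw [mul_zero] at h3
    exact Filter.Tendsto.congr' heq.symm h3
  · intro hx1
    subst hx1
    have h : (fun t : ℝ => bivExpC α (1 * t) (1 * t) / bivExpC α t t)
        =ᶠ[nhdsWithin 0 (Set.Ioi (0:ℝ))] (fun _ => (1:ℝ)) := by
      filter_upwards [self_mem_nhdsWithin] with t ht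
      have ht' : (0:ℝ) < t := ht
      have : bivExpC α t t ≠ 0 := by
        unfold bivExpC; positivity
      rw [one_mul, div_self this]
    exact Filter.Tendsto.congr' h.symm tendsto_const_nhds
  · intro hx1
    have hc : -2 * α * Real.log x < 0 := by
      have := Real.log_pos hx1
      nlinarith
    have h1 : Filter.Tendsto (fun t : ℝ => (-2 * α * Real.log x) * Real.log t)
        (nhdsWithin 0 (Set.Ioi 0)) atTop :=
      (tendsto_const_mul_atTop_of_neg hc).mpr hlog
    have h2 := Real.tendsto_exp_atTop.comp h1
    have h3 := h2.const_mul_atTop (by positivity :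
      (0:ℝ) < x ^ 2 * Real.exp (-α * Real.log x * Real.log x))
    exact Filter.Tendsto.congr' heq.symm h3
end
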